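/- arXiv:1805.01056 — 8 statements merged into one kernel-verified Lean document; each statement's English description precedes it below -/
import Mathlib

section
/- Let k ≥ 2 be an integer and let Γ be a connected bipartite k-regular simple graph on v vertices. Suppose f₀, f₁, …, f_t are real numbers with f₀ > 0 and f_j ≥ 0 for all 1 ≤ j ≤ t, and let f(x) = Σ_{i=0}^{t} f_i · 𝓕_{0,i}(x). If f(k²) > 0 and f(μ²) ≤ 0 for every eigenvalue μ of the adjacency matrix of Γ with μ ≠ k and μ ≠ −k, then v ≤ 2·f(k²)/f₀. -/
open Polynomial Matrix

/-- The orthogonal polynomials `F_i` defined by `F_0 = 1`, `F_1 = x`, `F_2 = x^2 - k`,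
and `F_i = x F_{i-1} - (k-1) F_{i-2}` for `i ≥ 3`. -/
noncomputable def Fpoly (k : ℝ) : ℕ → Polynomial ℝ
  | 0 => 1
  | 1 => X
  | 2 => X ^ 2 - C k
  | (n + 3) => X * Fpoly k (n + 2) - C (k - 1) * Fpoly k (n + 1)

/-- `G_i = ∑_{j=0}^{⌊i/2⌋} F_{i-2j}`. -/
noncomputable def Gpoly (k : ℝ) (i : ℕ) : Polynomial ℝ :=
  ∑ j ∈ Finset.range (i / 2 + 1), Fpoly k (i - 2 * j)

set_option linter.unusedSectionVars false
set_option maxHeartbeats 1600000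

namespace LPB

variable {V : Type*} [Fintype V] [DecidableEq V] (G : SimpleGraph V) [DecidableRel G.Adj]

noncomputable def Smat : Matrix V (V × V) ℝ :=
  Matrix.of fun u p => (if u = p.1 then 1 else 0) * G.adjMatrix ℝ p.1 p.2

noncomputable def Bmat : Matrix (V × V) (V × V) ℝ :=
  Matrix.of fun p q =>
    (if p.2 = q.1 then 1 else 0) * G.adjMatrix ℝ p.1 p.2 * G.adjMatrix ℝ q.1 q.2 *
      (if q.2 = p.1 then 0 else 1)

noncomputable def Emat (V : Type*) [DecidableEq V] : Matrix (V × V) V ℝ :=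
  Matrix.of fun p v => if p.2 = v then 1 else 0

noncomputable def Rmat : Matrix V (V × V) ℝ :=
  Matrix.of fun u p =>
    (if p.2 = u then 1 else 0) * G.adjMatrix ℝ u p.1 * G.adjMatrix ℝ p.1 p.2

lemma adj01 (u v : V) : G.adjMatrix ℝ u v = 0 ∨ G.adjMatrix ℝ u v = 1 :=
  (G.isAdjMatrix_adjMatrix ℝ).zero_or_one u v

lemma adj_nonneg (u v : V) : 0 ≤ G.adjMatrix ℝ u v := by
  rcases adj01 G u v with h | h <;> rw [h] <;> norm_num

lemma adj_symm (u v : V) : G.adjMatrix ℝ u v = G.adjMatrix ℝ v u := by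
  simp [SimpleGraph.adjMatrix_apply, SimpleGraph.adj_comm]

lemma row_sum {k : ℕ} (hreg : G.IsRegularOfDegree k) (u : V) :
    ∑ w, G.adjMatrix ℝ u w = (k : ℝ) := by
  have := SimpleGraph.adjMatrix_mulVec_const_apply_of_regular (α := ℝ) (a := (1 : ℝ))
    hreg (v := u)
  simpa [Matrix.mulVec, dotProduct] using this

lemma SE : Smat G * Emat V = G.adjMatrix ℝ := by
  refine Matrix.ext fun u v => ?_
  rw [Matrix.mul_apply, Fintype.sum_prod_type]
  rw [Fintype.sum_eq_single u (by intro a ha; simp [Smat, Ne.symm ha])]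
  rw [Fintype.sum_eq_single v (by intro b hb; simp [Emat, hb])]
  simp [Smat, Emat]

lemma SB_apply (u : V) (q : V × V) :
    (Smat G * Bmat G) u q
      = G.adjMatrix ℝ u q.1 * G.adjMatrix ℝ q.1 q.2 * (if q.2 = u then 0 else 1) := by
  rw [Matrix.mul_apply, Fintype.sum_prod_type]
  rw [Fintype.sum_eq_single u (by intro a ha; simp [Smat, Ne.symm ha])]
  rw [Fintype.sum_eq_single q.1 (by intro b hb; simp [Bmat, hb])]
  simp only [Smat, Bmat, Matrix.of_apply, eq_self_iff_true, if_true, one_mul]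
  rcases adj01 G u q.1 with h | h <;> rw [h] <;> ring_nf <;> simp

lemma AS_apply (u : V) (q : V × V) :
    (G.adjMatrix ℝ * Smat G) u q = G.adjMatrix ℝ u q.1 * G.adjMatrix ℝ q.1 q.2 := by
  rw [Matrix.mul_apply]
  rw [Fintype.sum_eq_single q.1 (by intro a ha; simp [Smat, ha, mul_comm])]
  simp [Smat]

lemma AS : G.adjMatrix ℝ * Smat G = Smat G * Bmat G + Rmat G := by
  refine Matrix.ext fun u q => ?_
  rw [Matrix.add_apply, AS_apply, SB_apply]
  simp only [Rmat, Matrix.of_apply]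
  by_cases h : q.2 = u
  · rw [if_pos h, if_pos h]; ring
  · rw [if_neg h, if_neg h]; ring

lemma SBE {k : ℕ} (hreg : G.IsRegularOfDegree k) :
    Smat G * Bmat G * Emat V = G.adjMatrix ℝ * G.adjMatrix ℝ - (k : ℝ) • 1 := by
  refine Matrix.ext fun u v => ?_
  rw [Matrix.mul_apply, Fintype.sum_prod_type]
  have key : ∀ c : V, ∑ d : V, (Smat G * Bmat G) u (c, d) * Emat V (c, d) v
      = G.adjMatrix ℝ u c * G.adjMatrix ℝ c v * (if v = u then 0 else 1) := by
    intro c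
    rw [Fintype.sum_eq_single v (by intro d hd; simp [Emat, hd])]
    rw [SB_apply]
    simp [Emat]
  simp only [key]
  by_cases h : v = u
  · rw [if_pos h]
    simp only [mul_zero, Finset.sum_const_zero]
    rw [Matrix.sub_apply, Matrix.smul_apply, h, Matrix.one_apply_eq, smul_eq_mul, mul_one]
    rw [SimpleGraph.adjMatrix_mul_self_apply_self, hreg u]
    ring
  · rw [if_neg h]
    simp only [mul_one]
    rw [Matrix.sub_apply, Matrix.smul_apply, Matrix.one_apply_ne (Ne.symm h), smul_eq_mul,
      mul_zero, sub_zero, Matrix.mul_apply]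

lemma RB {k : ℕ} (hreg : G.IsRegularOfDegree k) :
    Rmat G * Bmat G = ((k : ℝ) - 1) • Smat G := by
  refine Matrix.ext fun u q => ?_
  rw [Matrix.mul_apply, Fintype.sum_prod_type]
  have swap : ∀ a : V, ∑ b : V, Rmat G u (a, b) * Bmat G (a, b) q
      = G.adjMatrix ℝ u a * G.adjMatrix ℝ a u *
        ((if u = q.1 then 1 else 0) * G.adjMatrix ℝ a u * G.adjMatrix ℝ q.1 q.2 *
          (if q.2 = a then 0 else 1)) := by
    intro a
    rw [Fintype.sum_eq_single u (by intro b hb; simp [Rmat, hb])]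
    simp only [Rmat, Bmat, Matrix.of_apply, eq_self_iff_true, if_true, one_mul]
  simp only [swap]
  rw [Matrix.smul_apply]
  simp only [Smat, Matrix.of_apply, smul_eq_mul]
  by_cases h : u = q.1
  · rw [if_pos h]
    have key : ∀ a : V, G.adjMatrix ℝ u a * G.adjMatrix ℝ a u *
        (1 * G.adjMatrix ℝ a u * G.adjMatrix ℝ q.1 q.2 * (if q.2 = a then 0 else 1))
        = G.adjMatrix ℝ u a * G.adjMatrix ℝ q.1 q.2
          - (if q.2 = a then G.adjMatrix ℝ u a * G.adjMatrix ℝ q.1 q.2 else 0) := by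
      intro a
      rw [← adj_symm G u a]
      rcases adj01 G u a with h1 | h1 <;> rw [h1] <;> by_cases h2 : q.2 = a <;>
        simp only [h2, if_true, if_false, eq_self_iff_true] <;> ring
    simp only [key]
    rw [Finset.sum_sub_distrib, ← Finset.sum_mul, row_sum G hreg, Finset.sum_ite_eq]
    simp only [Finset.mem_univ, if_true]
    have h3 : G.adjMatrix ℝ u q.2 = G.adjMatrix ℝ q.1 q.2 := by rw [h]
    rw [h3]
    rcases adj01 G q.1 q.2 with h1 | h1 <;> rw [h1] <;> ring
  · rw [if_neg h]
    simp

lemma FA {k : ℕ} (hreg : G.IsRegularOfDegree k) :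
    ∀ j : ℕ, aeval (G.adjMatrix ℝ) (Fpoly (k : ℝ) (j + 1)) = Smat G * Bmat G ^ j * Emat V := by
  intro j
  induction j using Nat.twoStepInduction with
  | zero => simp [Fpoly, pow_zero, Matrix.mul_one, SE]
  | one =>
    rw [pow_one, SBE G hreg]
    show aeval (G.adjMatrix ℝ) (X ^ 2 - C (k : ℝ)) = _
    rw [map_sub, map_pow, aeval_X, aeval_C]
    rw [Algebra.algebraMap_eq_smul_one, sq]
  | more n ih1 ih2 =>
    show aeval (G.adjMatrix ℝ)
        (X * Fpoly (k : ℝ) (n + 2) - C ((k : ℝ) - 1) * Fpoly (k : ℝ) (n + 1)) = _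
    rw [map_sub, _root_.map_mul, _root_.map_mul, aeval_X, aeval_C, ih1, ih2]
    rw [← Matrix.mul_assoc (G.adjMatrix ℝ), ← Matrix.mul_assoc (G.adjMatrix ℝ), AS G]
    rw [Matrix.add_mul, Matrix.add_mul]
    have h1 : Smat G * Bmat G * Bmat G ^ (n + 1) * Emat V
        = Smat G * Bmat G ^ (n + 2) * Emat V := by
      rw [Matrix.mul_assoc (Smat G), ← pow_succ']
    have h2 : Rmat G * Bmat G ^ (n + 1) * Emat V
        = (((k : ℝ) - 1) • Smat G) * Bmat G ^ n * Emat V := by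
      rw [pow_succ', ← Matrix.mul_assoc, RB G hreg]
    rw [h1, h2]
    rw [Algebra.algebraMap_eq_smul_one]
    rw [Matrix.smul_mul, Matrix.smul_mul, Matrix.smul_mul, Matrix.one_mul]
    abel

lemma Smat_nonneg (u : V) (p : V × V) : 0 ≤ Smat G u p := by
  have := adj_nonneg G p.1 p.2
  simp only [Smat, Matrix.of_apply]
  split
  · simpa
  · simp

lemma Bmat_nonneg (p q : V × V) : 0 ≤ Bmat G p q := by
  have h1 := adj_nonneg G p.1 p.2
  have h2 := adj_nonneg G q.1 q.2
  simp only [Bmat, Matrix.of_apply]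
  split <;> split <;> simp <;> positivity

lemma Emat_nonneg (p : V × V) (v : V) : 0 ≤ Emat V p v := by
  simp only [Emat, Matrix.of_apply]; split <;> norm_num

lemma mul_nonneg_mat {α β γ : Type*} [Fintype β] (M : Matrix α β ℝ) (N : Matrix β γ ℝ)
    (hM : ∀ i j, 0 ≤ M i j) (hN : ∀ i j, 0 ≤ N i j) (i : α) (j : γ) : 0 ≤ (M * N) i j := by
  rw [Matrix.mul_apply]
  exact Finset.sum_nonneg fun b _ => mul_nonneg (hM i b) (hN b j)

lemma Bpow_nonneg (j : ℕ) (p q : V × V) : 0 ≤ (Bmat G ^ j) p q := by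
  induction j generalizing p q with
  | zero => rw [pow_zero, Matrix.one_apply]; split <;> norm_num
  | succ m ih => rw [pow_succ]; exact mul_nonneg_mat _ _ ih (Bmat_nonneg G) p q

lemma trace_FA_nonneg {k : ℕ} (hreg : G.IsRegularOfDegree k) (j : ℕ) :
    0 ≤ (aeval (G.adjMatrix ℝ) (Fpoly (k : ℝ) (j + 1))).trace := by
  rw [FA G hreg, Matrix.trace]
  refine Finset.sum_nonneg fun v _ => ?_
  exact mul_nonneg_mat _ _
    (fun i j' => mul_nonneg_mat _ _ (Smat_nonneg G) (Bpow_nonneg G j) i j')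
    (Emat_nonneg) v v


variable {m : Type*} [Fintype m] [DecidableEq m]

/-- Conjugation by a unitary as an `AlgHom`. -/
noncomputable def conjAH (U : Matrix m m ℝ) (h1 : star U * U = 1) (h2 : U * star U = 1) :
    Matrix m m ℝ →ₐ[ℝ] Matrix m m ℝ where
  toFun M := U * M * star U
  map_one' := by show U * 1 * star U = 1; rw [Matrix.mul_one, h2]
  map_mul' M N := by
    show U * (M * N) * star U = (U * M * star U) * (U * N * star U)
    have : U * (M * N) * star U = (U * M) * (star U * U) * (N * star U) := by
      rw [h1, Matrix.mul_one]; noncomm_ring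
    rw [this]; noncomm_ring
  map_zero' := by show U * 0 * star U = 0; simp
  map_add' M N := by
    show U * (M + N) * star U = U * M * star U + U * N * star U
    rw [Matrix.mul_add, Matrix.add_mul]
  commutes' r := by
    show U * algebraMap ℝ _ r * star U = algebraMap ℝ _ r
    rw [Algebra.algebraMap_eq_smul_one, Matrix.mul_smul, Matrix.mul_one, Matrix.smul_mul, h2]

lemma aeval_diag (d : m → ℝ) (g : Polynomial ℝ) :
    aeval (Matrix.diagonal d) g = Matrix.diagonal (fun i => g.eval (d i)) := by
  have h := Polynomial.aeval_algHom_apply (Matrix.diagonalAlgHom (α := ℝ) (n := m) ℝ) d g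
  rw [Matrix.diagonalAlgHom_apply] at h
  rw [h, Matrix.diagonalAlgHom_apply]
  have h3 : (aeval d g : m → ℝ) = fun i => g.eval (d i) := by
    funext i
    rw [Polynomial.aeval_fn_apply]
    exact congrFun (Polynomial.coe_aeval_eq_eval (d i)) g
  rw [h3]

lemma trace_aeval {A : Matrix m m ℝ} (hA : A.IsHermitian) (g : Polynomial ℝ) :
    (aeval A g).trace = ∑ i, g.eval (hA.eigenvalues i) := by
  set U : Matrix m m ℝ := (hA.eigenvectorUnitary : Matrix m m ℝ) with hU
  have hmem := hA.eigenvectorUnitary.2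
  rw [Unitary.mem_iff] at hmem
  obtain ⟨h1, h2⟩ := hmem
  rw [← hU] at h1 h2
  have hAeq : A = conjAH U h1 h2 (Matrix.diagonal hA.eigenvalues) := by
    have := hA.spectral_theorem
    simpa [conjAH, RCLike.ofReal_real_eq_id] using this
  have key : aeval A g = conjAH U h1 h2 (aeval (Matrix.diagonal hA.eigenvalues) g) := by
    conv_lhs => rw [hAeq]
    rw [← Polynomial.aeval_algHom_apply]
  rw [key, aeval_diag]
  show (U * Matrix.diagonal (fun i => g.eval (hA.eigenvalues i)) * star U).trace = _
  rw [Matrix.trace_mul_cycle, h1, Matrix.one_mul, Matrix.trace_diagonal]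




variable {V : Type*} [Fintype V] [DecidableEq V] (G : SimpleGraph V) [DecidableRel G.Adj]

/-- Maximum principle: an eigenvector of a connected `k`-regular graph for an eigenvalue of
absolute value `k` which vanishes somewhere is zero. -/
lemma eig_vanish {k : ℕ} (hconn : G.Connected) (hreg : G.IsRegularOfDegree k)
    (lam : ℝ) (hlam : |lam| = (k : ℝ)) (z : V → ℝ)
    (hz : G.adjMatrix ℝ *ᵥ z = lam • z) (u₀ : V) (h0 : z u₀ = 0) : z = 0 := by
  haveI : Nonempty V := hconn.nonempty
  set M : ℝ := Finset.univ.sup' Finset.univ_nonempty (fun v => |z v|) with hM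
  have hle : ∀ v, |z v| ≤ M := by
    intro v
    rw [hM]
    exact Finset.le_sup' (fun v => |z v|) (Finset.mem_univ v)
  obtain ⟨u, -, hu'⟩ := Finset.exists_mem_eq_sup' Finset.univ_nonempty (fun v => |z v|)
  have hu : M = |z u| := by rw [hM, hu']
  have step : ∀ v w, |z v| = M → G.Adj v w → |z w| = M := by
    intro v w hv hadj
    have hsum : ∑ x ∈ G.neighborFinset v, z x = lam * z v := by
      have := congrFun hz v
      rwa [SimpleGraph.adjMatrix_mulVec_apply, Pi.smul_apply, smul_eq_mul] at this
    have hcard : (G.neighborFinset v).card = k := hreg v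
    have h1 : (k : ℝ) * M = |∑ x ∈ G.neighborFinset v, z x| := by
      rw [hsum, abs_mul, hlam, hv]
    have h2 : |∑ x ∈ G.neighborFinset v, z x| ≤ ∑ x ∈ G.neighborFinset v, |z x| :=
      Finset.abs_sum_le_sum_abs _ _
    have h3 : ∑ x ∈ G.neighborFinset v, |z x| ≤ (k : ℝ) * M := by
      calc ∑ x ∈ G.neighborFinset v, |z x| ≤ ∑ _x ∈ G.neighborFinset v, M :=
            Finset.sum_le_sum fun x _ => hle x
        _ = (k : ℝ) * M := by rw [Finset.sum_const, hcard, nsmul_eq_mul]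
    have heq : ∑ x ∈ G.neighborFinset v, |z x| = ∑ _x ∈ G.neighborFinset v, M := by
      have := le_antisymm h3 (le_trans (le_of_eq h1) h2)
      rw [this, Finset.sum_const, hcard, nsmul_eq_mul]
    have hzero : ∑ x ∈ G.neighborFinset v, (M - |z x|) = 0 := by
      rw [Finset.sum_sub_distrib, heq]
      simp
    have := (Finset.sum_eq_zero_iff_of_nonneg
      (fun x _ => sub_nonneg.mpr (hle x))).mp hzero
    have hw := this w ((G.mem_neighborFinset v w).mpr hadj)
    linarith [sub_eq_zero.mp hw]
  have walkprop : ∀ a b : V, G.Walk a b → |z a| = M → |z b| = M := by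
    intro a b p
    induction p with
    | nil => exact id
    | cons h q ih => intro ha; exact ih (step _ _ ha h)
  have hall : ∀ v, |z v| = M := by
    intro v
    obtain ⟨p⟩ := hconn.preconnected u v
    exact walkprop u v p hu.symm
  have hM0 : M = 0 := by rw [← hall u₀, h0, abs_zero]
  funext v
  have := hle v
  rw [hM0] at this
  have := abs_nonneg (z v)
  simp only [Pi.zero_apply]
  have : |z v| = 0 := le_antisymm (by linarith) (abs_nonneg _)
  exact abs_eq_zero.mp this

lemma basis_orth {k : ℕ} (hA : (G.adjMatrix ℝ).IsHermitian) (a b : V) :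
    ∑ v, (hA.eigenvectorBasis a : EuclideanSpace ℝ V) v *
      (hA.eigenvectorBasis b : EuclideanSpace ℝ V) v = if a = b then 1 else 0 := by
  have hUU : star (hA.eigenvectorUnitary : Matrix V V ℝ) * (hA.eigenvectorUnitary : Matrix V V ℝ)
      = 1 := (Unitary.mem_iff.mp hA.eigenvectorUnitary.2).1
  have h := congrFun (congrFun hUU a) b
  rw [Matrix.mul_apply] at h
  simp only [Matrix.star_apply, star_trivial, Matrix.IsHermitian.eigenvectorUnitary_apply,
    Matrix.one_apply] at h
  exact h

lemma mult_le_one {k : ℕ} (hconn : G.Connected) (hreg : G.IsRegularOfDegree k)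
    (hA : (G.adjMatrix ℝ).IsHermitian) (lam : ℝ) (hlam : |lam| = (k : ℝ)) :
    ∀ i j, hA.eigenvalues i = lam → hA.eigenvalues j = lam → i = j := by
  intro i j hi hj
  by_contra hij
  set x : V → ℝ := ⇑(hA.eigenvectorBasis i) with hx
  set y : V → ℝ := ⇑(hA.eigenvectorBasis j) with hy
  have hAx : G.adjMatrix ℝ *ᵥ x = lam • x := by
    have := hA.mulVec_eigenvectorBasis i
    rwa [hi] at this
  have hAy : G.adjMatrix ℝ *ᵥ y = lam • y := by
    have := hA.mulVec_eigenvectorBasis j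
    rwa [hj] at this
  have hnorm : ∑ v, x v * x v = 1 := by
    have h := basis_orth G (k := k) hA i i
    rwa [if_pos rfl] at h
  have hnormy : ∑ v, y v * y v = 1 := by
    have h := basis_orth G (k := k) hA j j
    rwa [if_pos rfl] at h
  have horth : ∑ v, x v * y v = 0 := by
    have h := basis_orth G (k := k) hA i j
    rwa [if_neg hij] at h
  have hxn : x ≠ 0 := by
    intro h
    rw [h] at hnorm
    simp at hnorm
  obtain ⟨u₀, hu₀⟩ := Function.ne_iff.mp hxn
  simp only [Pi.zero_apply] at hu₀
  set z : V → ℝ := x u₀ • y - y u₀ • x with hzdef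
  have hAz : G.adjMatrix ℝ *ᵥ z = lam • z := by
    rw [hzdef, Matrix.mulVec_sub, Matrix.mulVec_smul, Matrix.mulVec_smul, hAx, hAy,
      smul_sub, smul_comm (x u₀) lam, smul_comm (y u₀) lam]
  have hz0 : z u₀ = 0 := by
    simp only [hzdef, Pi.sub_apply, Pi.smul_apply, smul_eq_mul]
    ring
  have hz := eig_vanish G hconn hreg lam hlam z hAz u₀ hz0
  have hsub : x u₀ • y = y u₀ • x := by
    have := sub_eq_zero.mp hz
    exact this
  have e1 : ∑ v, x v * (x u₀ * y v) = x u₀ * ∑ v, x v * y v := by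
    rw [Finset.mul_sum]
    exact Finset.sum_congr rfl fun v _ => by ring
  have e2 : ∑ v, x v * (y u₀ * x v) = y u₀ * ∑ v, x v * x v := by
    rw [Finset.mul_sum]
    exact Finset.sum_congr rfl fun v _ => by ring
  have h1 : ∑ v, x v * (x u₀ * y v) = ∑ v, x v * (y u₀ * x v) := by
    refine Finset.sum_congr rfl fun v _ => ?_
    have := congrFun hsub v
    simp only [Pi.smul_apply, smul_eq_mul] at this
    rw [this]
  rw [e1, e2, horth, hnorm, mul_zero, mul_one] at h1
  have hyu : y u₀ = 0 := h1.symm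
  have : x u₀ • y = 0 := by rw [hsub, hyu, zero_smul]
  rcases smul_eq_zero.mp this with h | h
  · exact hu₀ h
  · rw [h] at hnormy
    simp at hnormy



end LPB

/-- Linear programming bound for connected bipartite `k`-regular graphs (Theorem 3.1, bound).
Here `𝓕 i` is the unique polynomial with `𝓕 i (x²) = F_{2i}(x)`. -/
theorem stmt0 (k t n : ℕ) (hk : 2 ≤ k)
    (Γ : SimpleGraph (Fin n)) [DecidableRel Γ.Adj]
    (hconn : Γ.Connected) (hbip : Γ.Colorable 2) (hreg : Γ.IsRegularOfDegree k)
    (fc : ℕ → ℝ) (hf0 : 0 < fc 0) (hfj : ∀ j, 1 ≤ j → j ≤ t → 0 ≤ fc j)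
    (𝓕 : ℕ → Polynomial ℝ) (h𝓕 : ∀ i, (𝓕 i).comp (X ^ 2) = Fpoly (k : ℝ) (2 * i))
    (hfk : 0 < (∑ i ∈ Finset.range (t + 1), C (fc i) * 𝓕 i).eval ((k : ℝ) ^ 2))
    (hspec : ∀ μ ∈ spectrum ℝ (Γ.adjMatrix ℝ), μ ≠ (k : ℝ) → μ ≠ -(k : ℝ) →
      (∑ i ∈ Finset.range (t + 1), C (fc i) * 𝓕 i).eval (μ ^ 2) ≤ 0) :
    (n : ℝ) ≤ 2 * (∑ i ∈ Finset.range (t + 1), C (fc i) * 𝓕 i).eval ((k : ℝ) ^ 2) / fc 0 := by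
  classical
  haveI : Nonempty (Fin n) := hconn.nonempty
  set A : Matrix (Fin n) (Fin n) ℝ := Γ.adjMatrix ℝ with hAdef
  have hA : A.IsHermitian := by
    show Aᴴ = A
    ext i j
    simp [hAdef, Matrix.conjTranspose_apply, SimpleGraph.adj_comm]
  set p : Polynomial ℝ := ∑ i ∈ Finset.range (t + 1), C (fc i) * 𝓕 i with hp
  set g : Polynomial ℝ := p.comp (X ^ 2) with hgdef
  have hg : g = ∑ i ∈ Finset.range (t + 1), C (fc i) * Fpoly (k : ℝ) (2 * i) := by
    rw [hgdef, hp, Polynomial.sum_comp]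
    exact Finset.sum_congr rfl fun i _ => by rw [mul_comp, C_comp, h𝓕 i]
  have htr : (aeval A g).trace = ∑ i, p.eval (hA.eigenvalues i ^ 2) := by
    rw [LPB.trace_aeval hA g]
    refine Finset.sum_congr rfl fun i _ => ?_
    rw [hgdef, eval_comp, eval_pow, eval_X]
  -- lower bound on the trace
  have lower : (n : ℝ) * fc 0 ≤ (aeval A g).trace := by
    rw [hg, map_sum, Matrix.trace_sum]
    have hterm : ∀ i ∈ Finset.range (t + 1),
        (aeval A (C (fc i) * Fpoly (k : ℝ) (2 * i))).trace
          = fc i * (aeval A (Fpoly (k : ℝ) (2 * i))).trace := by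
      intro i _
      rw [_root_.map_mul, aeval_C, Algebra.algebraMap_eq_smul_one, Matrix.smul_mul,
        Matrix.one_mul, Matrix.trace_smul, smul_eq_mul]
    rw [Finset.sum_congr rfl hterm]
    rw [← Finset.sum_erase_add _ _ (Finset.mem_range.mpr (Nat.succ_pos t))]
    have h0 : fc 0 * (aeval A (Fpoly (k : ℝ) (2 * 0))).trace = fc 0 * n := by
      have : Fpoly (k : ℝ) (2 * 0) = 1 := rfl
      rw [this, _root_.map_one, Matrix.trace_one]
      norm_num
    rw [h0]
    have rest : (0 : ℝ) ≤ ∑ i ∈ (Finset.range (t + 1)).erase 0,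
        fc i * (aeval A (Fpoly (k : ℝ) (2 * i))).trace := by
      refine Finset.sum_nonneg fun i hi => ?_
      have hi1 : 1 ≤ i := Nat.one_le_iff_ne_zero.mpr (Finset.ne_of_mem_erase hi)
      have hit : i ≤ t := Nat.lt_succ_iff.mp (Finset.mem_range.mp (Finset.mem_of_mem_erase hi))
      have h2i : 2 * i = (2 * i - 1) + 1 := by omega
      refine mul_nonneg (hfj i hi1 hit) ?_
      rw [h2i]
      exact LPB.trace_FA_nonneg Γ hreg (2 * i - 1)
    linarith
  -- upper bound on the trace
  have habs : |(k : ℝ)| = (k : ℝ) := abs_of_nonneg (Nat.cast_nonneg k)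
  have habs' : |(-(k : ℝ))| = (k : ℝ) := by rw [abs_neg]; exact habs
  have upper : ∑ i, p.eval (hA.eigenvalues i ^ 2) ≤ 2 * p.eval ((k : ℝ) ^ 2) := by
    have hsplit := Finset.sum_filter_add_sum_filter_not Finset.univ
      (fun i => hA.eigenvalues i = (k : ℝ) ∨ hA.eigenvalues i = -(k : ℝ))
      (fun i => p.eval (hA.eigenvalues i ^ 2))
    have hT : ∑ i ∈ Finset.univ.filter
        (fun i => hA.eigenvalues i = (k : ℝ) ∨ hA.eigenvalues i = -(k : ℝ)),
        p.eval (hA.eigenvalues i ^ 2) ≤ 2 * p.eval ((k : ℝ) ^ 2) := by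
      have heach : ∀ i ∈ Finset.univ.filter
          (fun i => hA.eigenvalues i = (k : ℝ) ∨ hA.eigenvalues i = -(k : ℝ)),
          p.eval (hA.eigenvalues i ^ 2) = p.eval ((k : ℝ) ^ 2) := by
        intro i hi
        rcases (Finset.mem_filter.mp hi).2 with h | h <;> rw [h]
        rw [neg_pow]
        norm_num
      rw [Finset.sum_congr rfl heach, Finset.sum_const, nsmul_eq_mul]
      have hc1 : (Finset.univ.filter (fun i => hA.eigenvalues i = (k : ℝ))).card ≤ 1 := by
        refine Finset.card_le_one.mpr fun a ha b hb => ?_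
        exact LPB.mult_le_one Γ hconn hreg hA (k : ℝ) habs a b
          (Finset.mem_filter.mp ha).2 (Finset.mem_filter.mp hb).2
      have hc2 : (Finset.univ.filter (fun i => hA.eigenvalues i = -(k : ℝ))).card ≤ 1 := by
        refine Finset.card_le_one.mpr fun a ha b hb => ?_
        exact LPB.mult_le_one Γ hconn hreg hA (-(k : ℝ)) habs' a b
          (Finset.mem_filter.mp ha).2 (Finset.mem_filter.mp hb).2
      have hsub : Finset.univ.filter
          (fun i => hA.eigenvalues i = (k : ℝ) ∨ hA.eigenvalues i = -(k : ℝ))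
          ⊆ Finset.univ.filter (fun i => hA.eigenvalues i = (k : ℝ))
            ∪ Finset.univ.filter (fun i => hA.eigenvalues i = -(k : ℝ)) := by
        intro i hi
        simp only [Finset.mem_filter, Finset.mem_union, Finset.mem_univ, true_and] at hi ⊢
        exact hi
      have hcard : (Finset.univ.filter
          (fun i => hA.eigenvalues i = (k : ℝ) ∨ hA.eigenvalues i = -(k : ℝ))).card ≤ 2 := by
        refine le_trans (Finset.card_le_card hsub) (le_trans (Finset.card_union_le _ _) ?_)
        omega
      have : ((Finset.univ.filter
          (fun i => hA.eigenvalues i = (k : ℝ) ∨ hA.eigenvalues i = -(k : ℝ))).card : ℝ) ≤ 2 := by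
        exact_mod_cast hcard
      exact mul_le_mul_of_nonneg_right this (le_of_lt hfk)
    have hTc : ∑ i ∈ Finset.univ.filter
        (fun i => ¬(hA.eigenvalues i = (k : ℝ) ∨ hA.eigenvalues i = -(k : ℝ))),
        p.eval (hA.eigenvalues i ^ 2) ≤ 0 := by
      refine Finset.sum_nonpos fun i hi => ?_
      have h := (Finset.mem_filter.mp hi).2
      push_neg at h
      exact hspec (hA.eigenvalues i) (hA.eigenvalues_mem_spectrum_real i) h.1 h.2
    linarith
  rw [le_div_iff₀ hf0]
  calc (n : ℝ) * fc 0 ≤ (aeval A g).trace := lower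
    _ = ∑ i, p.eval (hA.eigenvalues i ^ 2) := htr
    _ ≤ 2 * p.eval ((k : ℝ) ^ 2) := upper
end

section
/- Let k ≥ 2 be an integer and let Γ be a connected bipartite k-regular simple graph on v vertices. Suppose f₀, f₁, …, f_t are real numbers with f₀ > 0 and f_j > 0 for all 1 ≤ j ≤ t, let f(x) = Σ_{i=0}^{t} f_i · 𝓕_{0,i}(x), and assume f(k²) > 0 and f(μ²) ≤ 0 for every eigenvalue μ of the adjacency matrix of Γ with μ ≠ k and μ ≠ −k. If v = 2·f(k²)/f₀, then the girth of Γ is at least 2t+2. -/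
/-!
Evaluate `P(x) = ∑ fᵢ F_{2i}(x) = f(x²)` at the adjacency matrix `A` and compute `tr P(A)` in
two ways.

Spectrally, `tr P(A) = ∑ P(λ)` over the eigenvalues `λ` of `A`. In a connected `k`-regular graph
the `k`-eigenvectors are constant, and in a bipartite one the `-k`-eigenvectors are obtained from
them by flipping signs on one side, so each of `±k` occurs at most once; every other eigenvalue
contributes `≤ 0`. Hence `tr P(A) ≤ 2 f(k²) = f₀ v`.

Combinatorially, with `S`, `R` the tail and head incidence matrices between vertices and darts and
`T` the non-backtracking matrix on darts, `F_{j+1}(A) = S Tʲ R` counts non-backtracking walks of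
length `j + 1`. So `tr F_{2i}(A) ≥ 0` for `i ≥ 1`, while a cycle of length `2m ≤ 2t` (even, as `Γ`
is bipartite) gives `tr F_{2m}(A) ≥ 1`, whence `tr P(A) ≥ f₀ v + f_m > f₀ v`.
-/

open Polynomial Matrix

open Finset

namespace Matrix

variable {l m n α : Type*} [Fintype m] [Semiring α] [PartialOrder α] [IsOrderedRing α]
  {M : Matrix l m α} {N : Matrix m n α}

lemma mul_apply_nonneg (hM : ∀ i j, 0 ≤ M i j) (hN : ∀ i j, 0 ≤ N i j) (i : l) (j : n) :
    0 ≤ (M * N) i j :=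
  sum_nonneg fun x _ => mul_nonneg (hM i x) (hN x j)

lemma apply_mul_apply_le_mul_apply (hM : ∀ i j, 0 ≤ M i j) (hN : ∀ i j, 0 ≤ N i j) (i : l)
    (x : m) (j : n) : M i x * N x j ≤ (M * N) i j :=
  single_le_sum (f := fun x => M i x * N x j) (fun x _ => mul_nonneg (hM i x) (hN x j))
    (mem_univ x)

end Matrix

lemma Orthonormal.eq_of_mem_span_singleton {ι E : Type*} [NormedAddCommGroup E]
    [InnerProductSpace ℝ E] {e : ι → E} (he : Orthonormal ℝ e) {x : E} {i j : ι}
    (hi : e i ∈ ℝ ∙ x) (hj : e j ∈ ℝ ∙ x) : i = j := by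
  by_contra hij
  obtain ⟨a, ha⟩ := Submodule.mem_span_singleton.mp hi
  obtain ⟨b, hb⟩ := Submodule.mem_span_singleton.mp hj
  have h0 : a * b * ‖x‖ ^ 2 = 0 := by
    rw [← he.2 hij, ← ha, ← hb, inner_smul_left, inner_smul_right, real_inner_self_eq_norm_sq]
    simp [mul_assoc]
  have h1 : |a * b| * ‖x‖ ^ 2 = 1 := by
    have := congrArg₂ (· * ·) (he.1 i) (he.1 j)
    simp only [← ha, ← hb, norm_smul, Real.norm_eq_abs, mul_one] at this
    rw [abs_mul, ← this]; ring
  rw [← abs_of_nonneg (sq_nonneg ‖x‖), ← abs_mul, h0, abs_zero] at h1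
  exact zero_ne_one h1

namespace Matrix.IsHermitian

variable {n : Type*} [Fintype n] [DecidableEq n] {A : Matrix n n ℝ} (hA : A.IsHermitian)

theorem trace_aeval (p : ℝ[X]) : (aeval A p).trace = ∑ i, p.eval (hA.eigenvalues i) := by
  rw [← cfc_polynomial p A hA.isSelfAdjoint, hA.cfc_eq, IsHermitian.cfc,
    Unitary.conjStarAlgAut_apply, trace_mul_cycle, Unitary.coe_star_mul_self, Matrix.one_mul,
    trace_diagonal]
  rfl

theorem card_eigenvalues_eq_le_one {μ : ℝ} (v : n → ℝ)
    (hμ : ∀ w : n → ℝ, A *ᵥ w = μ • w → w ∈ ℝ ∙ v) :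
    #{i | hA.eigenvalues i = μ} ≤ 1 := by
  refine card_le_one.mpr fun i hi j hj => ?_
  have hmem : ∀ i ∈ ({i | hA.eigenvalues i = μ} : Finset n),
      hA.eigenvectorBasis i ∈ ℝ ∙ WithLp.toLp 2 v := by
    intro i hi
    obtain ⟨a, ha⟩ := Submodule.mem_span_singleton.mp
      (hμ _ (by rw [hA.mulVec_eigenvectorBasis, (mem_filter.mp hi).2]))
    exact Submodule.mem_span_singleton.mpr ⟨a, by rw [← WithLp.toLp_smul, ha]⟩
  exact hA.eigenvectorBasis.orthonormal.eq_of_mem_span_singleton (hmem i hi) (hmem j hj)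

end Matrix.IsHermitian

namespace SimpleGraph

variable {V : Type*}

section NonBacktracking

variable [DecidableEq V] (G : SimpleGraph V)

def dartTailMatrix : Matrix V G.Dart ℝ := of fun u d => if d.fst = u then 1 else 0

def dartHeadMatrix : Matrix G.Dart V ℝ := of fun d v => if d.snd = v then 1 else 0

def dartSymmMatrix : Matrix G.Dart G.Dart ℝ := of fun d d' => if d' = d.symm then 1 else 0

def nonBacktrackingMatrix : Matrix G.Dart G.Dart ℝ :=
  of fun d d' => if d.snd = d'.fst ∧ d' ≠ d.symm then 1 else 0

lemma nonBacktrackingMatrix_add_dartSymmMatrix [Fintype V] :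
    G.nonBacktrackingMatrix + G.dartSymmMatrix = G.dartHeadMatrix * G.dartTailMatrix := by
  ext d d'
  simp only [Matrix.add_apply, mul_apply, dartTailMatrix, dartSymmMatrix, dartHeadMatrix,
    nonBacktrackingMatrix, of_apply]
  by_cases h : d' = d.symm
  · subst h; simp
  · simp [h]

lemma dartTailMatrix_nonneg (u : V) (d : G.Dart) : 0 ≤ G.dartTailMatrix u d := by
  simp only [dartTailMatrix, of_apply]; positivity

lemma dartHeadMatrix_nonneg (d : G.Dart) (v : V) : 0 ≤ G.dartHeadMatrix d v := by
  simp only [dartHeadMatrix, of_apply]; positivity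

lemma nonBacktrackingMatrix_nonneg (d d' : G.Dart) : 0 ≤ G.nonBacktrackingMatrix d d' := by
  simp only [nonBacktrackingMatrix, of_apply]; positivity

variable [Fintype V] [DecidableRel G.Adj] {k : ℕ}

lemma dartTailMatrix_mul_dartHeadMatrix :
    G.dartTailMatrix * G.dartHeadMatrix = G.adjMatrix ℝ := by
  ext u v
  simp only [mul_apply, dartTailMatrix, dartHeadMatrix, of_apply, mul_ite, mul_one, mul_zero,
    adjMatrix_apply]
  by_cases h : G.Adj u v
  · rw [sum_eq_single ⟨(u, v), h⟩] <;> aesop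
  · rw [if_neg h]
    refine sum_eq_zero fun d _ => ?_
    aesop

lemma dartHeadMatrix_transpose_mul_dartHeadMatrix :
    G.dartHeadMatrixᵀ * G.dartHeadMatrix = G.degMatrix ℝ := by
  ext u v
  rw [mul_apply, ← Equiv.sum_comp (Dart.symm_involutive.toPerm _), degMatrix, diagonal_apply]
  simp only [transpose_apply, dartHeadMatrix, of_apply, Function.Involutive.coe_toPerm,
    Dart.symm_toProd, Prod.snd_swap, ← ite_and, mul_ite, mul_one, mul_zero]
  split_ifs with huv
  · subst huv
    simp [sum_boole, dart_fst_fiber_card_eq_degree]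
  · exact sum_eq_zero fun d _ => if_neg fun h => huv (h.2.symm.trans h.1)

lemma dartTailMatrix_mul_dartSymmMatrix :
    G.dartTailMatrix * G.dartSymmMatrix = G.dartHeadMatrixᵀ := by
  ext u d
  simp [mul_apply, dartTailMatrix, dartSymmMatrix, dartHeadMatrix, eq_comm (a := d),
    Dart.symm_involutive.eq_iff]

lemma dartHeadMatrix_transpose_mul_dartSymmMatrix :
    G.dartHeadMatrixᵀ * G.dartSymmMatrix = G.dartTailMatrix := by
  ext u d
  simp [mul_apply, dartTailMatrix, dartSymmMatrix, dartHeadMatrix, ← Dart.symm_involutive.eq_iff]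

lemma adjMatrix_mul_dartTailMatrix :
    G.adjMatrix ℝ * G.dartTailMatrix =
      G.dartTailMatrix * G.nonBacktrackingMatrix + G.dartHeadMatrixᵀ := by
  rw [← dartTailMatrix_mul_dartSymmMatrix, ← Matrix.mul_add,
    nonBacktrackingMatrix_add_dartSymmMatrix, ← dartTailMatrix_mul_dartHeadMatrix, Matrix.mul_assoc]

lemma dartHeadMatrix_transpose_mul_nonBacktrackingMatrix :
    G.dartHeadMatrixᵀ * G.nonBacktrackingMatrix =
      G.degMatrix ℝ * G.dartTailMatrix - G.dartTailMatrix := calc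
  _ = G.dartHeadMatrixᵀ * (G.nonBacktrackingMatrix + G.dartSymmMatrix)
      - G.dartHeadMatrixᵀ * G.dartSymmMatrix := by rw [Matrix.mul_add, add_sub_cancel_right]
  _ = _ := by
    rw [nonBacktrackingMatrix_add_dartSymmMatrix, dartHeadMatrix_transpose_mul_dartSymmMatrix,
      ← Matrix.mul_assoc, dartHeadMatrix_transpose_mul_dartHeadMatrix]

lemma IsRegularOfDegree.degMatrix_eq (hreg : G.IsRegularOfDegree k) :
    G.degMatrix ℝ = (k : ℝ) • (1 : Matrix V V ℝ) := by
  rw [degMatrix, smul_one_eq_diagonal]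
  simp only [hreg.degree_eq]

lemma adjMatrix_mul_dartTailMatrix_mul_pow_mul (j : ℕ) :
    G.adjMatrix ℝ * (G.dartTailMatrix * G.nonBacktrackingMatrix ^ j * G.dartHeadMatrix) =
      G.dartTailMatrix * G.nonBacktrackingMatrix ^ (j + 1) * G.dartHeadMatrix +
        G.dartHeadMatrixᵀ * G.nonBacktrackingMatrix ^ j * G.dartHeadMatrix := by
  simp only [← Matrix.mul_assoc, adjMatrix_mul_dartTailMatrix, Matrix.add_mul, pow_succ']

theorem aeval_adjMatrix_Fpoly_succ (hreg : G.IsRegularOfDegree k) (j : ℕ) :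
    aeval (G.adjMatrix ℝ) (Fpoly k (j + 1)) =
      G.dartTailMatrix * G.nonBacktrackingMatrix ^ j * G.dartHeadMatrix := by
  have hRR : G.dartHeadMatrixᵀ * G.dartHeadMatrix = (k : ℝ) • 1 := by
    rw [dartHeadMatrix_transpose_mul_dartHeadMatrix, hreg.degMatrix_eq]
  have hRT : G.dartHeadMatrixᵀ * G.nonBacktrackingMatrix = ((k : ℝ) - 1) • G.dartTailMatrix := by
    rw [dartHeadMatrix_transpose_mul_nonBacktrackingMatrix, hreg.degMatrix_eq, smul_mul,
      Matrix.one_mul, sub_smul, one_smul]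
  induction j using Nat.twoStepInduction with
  | zero => simp [Fpoly, dartTailMatrix_mul_dartHeadMatrix]
  | one =>
    have h := G.adjMatrix_mul_dartTailMatrix_mul_pow_mul 0
    rw [pow_zero, Matrix.mul_one, Matrix.mul_one, hRR, dartTailMatrix_mul_dartHeadMatrix] at h
    rw [Fpoly, map_sub, map_pow, aeval_X, aeval_C, sq, h, Algebra.algebraMap_eq_smul_one,
      add_sub_cancel_right]
  | more j ih₁ ih₂ =>
    have hstep : G.dartHeadMatrixᵀ * G.nonBacktrackingMatrix ^ (j + 1) * G.dartHeadMatrix =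
        ((k : ℝ) - 1) • (G.dartTailMatrix * G.nonBacktrackingMatrix ^ j * G.dartHeadMatrix) := by
      rw [pow_succ', ← Matrix.mul_assoc, hRT, smul_mul, smul_mul, Matrix.mul_assoc]
    rw [Fpoly, map_sub, map_mul, map_mul, aeval_X, aeval_C, ih₁, ih₂,
      adjMatrix_mul_dartTailMatrix_mul_pow_mul, hstep, Algebra.algebraMap_eq_smul_one, smul_one_mul,
      add_sub_cancel_right]

lemma nonBacktrackingMatrix_pow_mul_dartHeadMatrix_nonneg (j : ℕ) (d : G.Dart) (v : V) :
    0 ≤ (G.nonBacktrackingMatrix ^ j * G.dartHeadMatrix) d v :=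
  mul_apply_nonneg (pow_apply_nonneg G.nonBacktrackingMatrix_nonneg j) G.dartHeadMatrix_nonneg d v

lemma one_le_nonBacktrackingMatrix_pow_mul_dartHeadMatrix {y v : V} (q : G.Walk y v) {x : V}
    (h : G.Adj x y) (hq : (Walk.cons h q).IsTrail) :
    1 ≤ (G.nonBacktrackingMatrix ^ q.length * G.dartHeadMatrix) ⟨(x, y), h⟩ v := by
  induction q generalizing x with
  | nil => simp [dartHeadMatrix]
  | @cons y z v h' q ih =>
    rw [Walk.isTrail_cons] at hq
    have hturn : G.nonBacktrackingMatrix ⟨(x, y), h⟩ ⟨(y, z), h'⟩ = 1 := by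
      have hzx : z ≠ x := by
        rintro rfl
        exact hq.2 (by simp [Sym2.eq_swap])
      simp [nonBacktrackingMatrix, Dart.ext_iff, hzx]
    calc 1 ≤ G.nonBacktrackingMatrix ⟨(x, y), h⟩ ⟨(y, z), h'⟩ *
          (G.nonBacktrackingMatrix ^ q.length * G.dartHeadMatrix) ⟨(y, z), h'⟩ v := by
          rw [hturn, one_mul]; exact ih h' hq.1
      _ ≤ _ := by
        rw [Walk.length_cons, pow_succ', Matrix.mul_assoc]
        exact apply_mul_apply_le_mul_apply G.nonBacktrackingMatrix_nonneg
          (G.nonBacktrackingMatrix_pow_mul_dartHeadMatrix_nonneg _) _ _ _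

lemma trace_aeval_adjMatrix_Fpoly_nonneg (hreg : G.IsRegularOfDegree k) {j : ℕ}
    (hj : j ≠ 0) : 0 ≤ (aeval (G.adjMatrix ℝ) (Fpoly k j)).trace := by
  obtain ⟨i, rfl⟩ := Nat.exists_eq_succ_of_ne_zero hj
  rw [aeval_adjMatrix_Fpoly_succ G hreg, Matrix.mul_assoc]
  exact sum_nonneg fun u _ => mul_apply_nonneg G.dartTailMatrix_nonneg
    (G.nonBacktrackingMatrix_pow_mul_dartHeadMatrix_nonneg i) u u

lemma one_le_trace_aeval_adjMatrix_Fpoly_of_isCycle (hreg : G.IsRegularOfDegree k)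
    {a : V} {w : G.Walk a a} (hw : w.IsCycle) :
    1 ≤ (aeval (G.adjMatrix ℝ) (Fpoly k w.length)).trace := by
  cases w with
  | nil => exact absurd hw Walk.not_isCycle_nil
  | @cons _ y _ h q =>
    rw [Walk.length_cons, aeval_adjMatrix_Fpoly_succ G hreg, Matrix.mul_assoc]
    have hnonneg := G.nonBacktrackingMatrix_pow_mul_dartHeadMatrix_nonneg q.length
    calc (1 : ℝ) ≤ G.dartTailMatrix a ⟨(a, y), h⟩ *
          (G.nonBacktrackingMatrix ^ q.length * G.dartHeadMatrix) ⟨(a, y), h⟩ a := by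
          simpa [dartTailMatrix] using
            G.one_le_nonBacktrackingMatrix_pow_mul_dartHeadMatrix q h hw.isTrail
      _ ≤ _ := apply_mul_apply_le_mul_apply G.dartTailMatrix_nonneg hnonneg _ _ _
      _ ≤ _ := single_le_sum (f := fun u => _) (fun u _ =>
          mul_apply_nonneg G.dartTailMatrix_nonneg hnonneg u u) (mem_univ a)

theorem le_trace_aeval_adjMatrix_sum_Fpoly (hreg : G.IsRegularOfDegree k) (fc : ℕ → ℝ)
    {t m : ℕ} (hfc : ∀ j, 1 ≤ j → j ≤ t → 0 ≤ fc j) {a : V} {w : G.Walk a a} (hw : w.IsCycle)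
    (hm : w.length = 2 * m) (hmt : m ≤ t) :
    fc 0 * Fintype.card V + fc m ≤
      (aeval (G.adjMatrix ℝ) (∑ i ∈ range (t + 1), C (fc i) * Fpoly k (2 * i))).trace := by
  have hm0 : m ≠ 0 := by have := hw.three_le_length; omega
  have htrace_C_mul (i : ℕ) : (aeval (G.adjMatrix ℝ) (C (fc i) * Fpoly k (2 * i))).trace =
      fc i * (aeval (G.adjMatrix ℝ) (Fpoly k (2 * i))).trace := by
    rw [← smul_eq_C_mul, map_smul, trace_smul, smul_eq_mul]
  have hcycle : fc m ≤ fc m * (aeval (G.adjMatrix ℝ) (Fpoly k (2 * m))).trace :=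
    le_mul_of_one_le_right (hfc m (by omega) hmt)
      (hm ▸ G.one_le_trace_aeval_adjMatrix_Fpoly_of_isCycle hreg hw)
  have hrest : fc m * (aeval (G.adjMatrix ℝ) (Fpoly k (2 * m))).trace ≤
      ∑ i ∈ range t, fc (i + 1) * (aeval (G.adjMatrix ℝ) (Fpoly k (2 * (i + 1)))).trace := by
    obtain ⟨i, rfl⟩ : ∃ i, m = i + 1 := ⟨m - 1, by omega⟩
    refine single_le_sum (f := fun i => fc (i + 1) *
      (aeval (G.adjMatrix ℝ) (Fpoly k (2 * (i + 1)))).trace) (fun j hj => mul_nonneg ?_ ?_)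
      (mem_range.mpr hmt)
    · exact hfc _ (by omega) (by simpa using hj)
    · exact G.trace_aeval_adjMatrix_Fpoly_nonneg hreg (by omega)
  rw [map_sum, trace_sum, sum_congr rfl fun i _ => htrace_C_mul i, sum_range_succ']
  simp only [Fpoly, map_one, trace_one]
  linarith

end NonBacktracking

section Spectrum

variable [Fintype V] {G : SimpleGraph V} [DecidableRel G.Adj] {k : ℕ}

lemma adjMatrix_mulVec_mul_of_forall_adj {s : V → ℝ} (hs : ∀ x y, G.Adj x y → s y = -s x)
    (w : V → ℝ) : G.adjMatrix ℝ *ᵥ (s * w) = -(s * (G.adjMatrix ℝ *ᵥ w)) := by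
  ext x
  simp only [adjMatrix_mulVec_apply, Pi.mul_apply, Pi.neg_apply, mul_sum, ← sum_neg_distrib]
  refine sum_congr rfl fun y hy => ?_
  rw [hs x y ((mem_neighborFinset G x y).mp hy)]; ring

variable [DecidableEq V]

lemma IsRegularOfDegree.mem_span_one_of_adjMatrix_mulVec_eq (hreg : G.IsRegularOfDegree k)
    (hconn : G.Connected) {w : V → ℝ} (hw : G.adjMatrix ℝ *ᵥ w = (k : ℝ) • w) :
    w ∈ ℝ ∙ (1 : V → ℝ) := by
  have hlap : G.lapMatrix ℝ *ᵥ w = 0 := by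
    rw [lapMatrix, sub_mulVec, hw, hreg.degMatrix_eq, smul_mulVec, one_mulVec, sub_self]
  have hconst := (lapMatrix_mulVec_eq_zero_iff_forall_reachable G).mp hlap
  obtain ⟨v₀⟩ := hconn.nonempty
  exact Submodule.mem_span_singleton.mpr
    ⟨w v₀, funext fun v => by simp [hconst v₀ v (hconn v₀ v)]⟩

lemma IsRegularOfDegree.mem_span_of_adjMatrix_mulVec_eq_neg (hreg : G.IsRegularOfDegree k)
    (hconn : G.Connected) (c : G.Coloring Bool) {w : V → ℝ}
    (hw : G.adjMatrix ℝ *ᵥ w = -(k : ℝ) • w) :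
    w ∈ ℝ ∙ (fun x => if c x then 1 else -1 : V → ℝ) := by
  set s : V → ℝ := fun x => if c x then 1 else -1
  have hs : ∀ x y, G.Adj x y → s y = -s x := by
    intro x y h
    have := c.valid h
    cases hx : c x <;> cases hy : c y <;> simp_all [s]
  have hss : s * s = 1 := funext fun x => by by_cases hx : c x <;> simp [s, hx]
  have hsw : G.adjMatrix ℝ *ᵥ (s * w) = (k : ℝ) • (s * w) := by
    rw [adjMatrix_mulVec_mul_of_forall_adj hs, hw, mul_smul_comm, neg_smul, neg_neg]
  obtain ⟨a, ha⟩ :=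
    Submodule.mem_span_singleton.mp (hreg.mem_span_one_of_adjMatrix_mulVec_eq hconn hsw)
  refine Submodule.mem_span_singleton.mpr ⟨a, ?_⟩
  rw [← mul_one w, ← hss, ← mul_assoc, mul_comm w, ← ha, smul_mul_assoc, one_mul]

theorem IsRegularOfDegree.trace_aeval_adjMatrix_le (hreg : G.IsRegularOfDegree k)
    (hconn : G.Connected) (c : G.Coloring Bool) {P : ℝ[X]} {F : ℝ} (hF : 0 ≤ F)
    (hPk : P.eval (k : ℝ) = F) (hPk' : P.eval (-(k : ℝ)) = F)
    (hP : ∀ μ ∈ spectrum ℝ (G.adjMatrix ℝ), μ ≠ k → μ ≠ -k → P.eval μ ≤ 0) :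
    (aeval (G.adjMatrix ℝ) P).trace ≤ 2 * F := by
  have hA := G.isHermitian_adjMatrix ℝ
  have hcard : #{i | hA.eigenvalues i = k} ≤ 1 :=
    hA.card_eigenvalues_eq_le_one 1 fun _ => hreg.mem_span_one_of_adjMatrix_mulVec_eq hconn
  have hcard' : #{i | hA.eigenvalues i = -(k : ℝ)} ≤ 1 :=
    hA.card_eigenvalues_eq_le_one _ fun _ => hreg.mem_span_of_adjMatrix_mulVec_eq_neg hconn c
  have hpoint (i : V) : P.eval (hA.eigenvalues i) ≤
      (if hA.eigenvalues i = k then F else 0) + (if hA.eigenvalues i = -k then F else 0) := by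
    by_cases h : hA.eigenvalues i = k
    · rw [if_pos h, h, hPk]; split_ifs <;> linarith
    by_cases h' : hA.eigenvalues i = -k
    · rw [if_pos h', if_neg h, h', hPk', zero_add]
    rw [if_neg h, if_neg h', add_zero]
    exact hP _ (hA.eigenvalues_mem_spectrum_real i) h h'
  calc (aeval (G.adjMatrix ℝ) P).trace = ∑ i, P.eval (hA.eigenvalues i) := hA.trace_aeval P
    _ ≤ #{i | hA.eigenvalues i = k} * F + #{i | hA.eigenvalues i = -(k : ℝ)} * F := by
      refine (sum_le_sum fun i _ => hpoint i).trans_eq ?_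
      simp only [sum_add_distrib, sum_ite, sum_const, smul_zero, add_zero, nsmul_eq_mul]
    _ ≤ 1 * F + 1 * F := by
      gcongr
      · exact_mod_cast hcard
      · exact_mod_cast hcard'
    _ = 2 * F := by ring

end Spectrum

end SimpleGraph

theorem stmt1_general (k t n : ℕ)
    (Γ : SimpleGraph (Fin n)) [DecidableRel Γ.Adj]
    (hconn : Γ.Connected) (hbip : Γ.Colorable 2) (hreg : Γ.IsRegularOfDegree k)
    (fc : ℕ → ℝ) (hf0 : 0 < fc 0) (hfj : ∀ j, 1 ≤ j → j ≤ t → 0 < fc j)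
    (𝓕 : ℕ → Polynomial ℝ) (h𝓕 : ∀ i, (𝓕 i).comp (X ^ 2) = Fpoly (k : ℝ) (2 * i))
    (hfk : 0 < (∑ i ∈ Finset.range (t + 1), C (fc i) * 𝓕 i).eval ((k : ℝ) ^ 2))
    (hspec : ∀ μ ∈ spectrum ℝ (Γ.adjMatrix ℝ), μ ≠ (k : ℝ) → μ ≠ -(k : ℝ) →
      (∑ i ∈ Finset.range (t + 1), C (fc i) * 𝓕 i).eval (μ ^ 2) ≤ 0)
    (heq : (n : ℝ) = 2 * (∑ i ∈ Finset.range (t + 1), C (fc i) * 𝓕 i).eval ((k : ℝ) ^ 2) / fc 0) :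
    ((2 * t + 2 : ℕ) : ℕ∞) ≤ Γ.egirth := by
  set f := ∑ i ∈ Finset.range (t + 1), C (fc i) * 𝓕 i
  have hf_eval (μ : ℝ) :
      (∑ i ∈ range (t + 1), C (fc i) * Fpoly k (2 * i)).eval μ = f.eval (μ ^ 2) := by
    simp only [f, ← h𝓕, eval_finsetSum, eval_mul, eval_C, eval_comp, eval_pow, eval_X]
  have c : Γ.Coloring Bool := Γ.recolorOfEquiv finTwoEquiv hbip.some
  rw [SimpleGraph.le_egirth]
  intro a w hw
  by_contra hshort
  have hlen : w.length < 2 * t + 2 := by exact_mod_cast not_le.mp hshort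
  obtain ⟨m, hm⟩ : Even w.length := (c.even_length_iff_congr w).mpr Iff.rfl
  have hlower := Γ.le_trace_aeval_adjMatrix_sum_Fpoly hreg fc (fun j h₁ h₂ => (hfj j h₁ h₂).le)
    hw (m := m) (by omega) (by omega)
  have hupper := hreg.trace_aeval_adjMatrix_le hconn c hfk.le (hf_eval k)
    (by rw [hf_eval, neg_sq]) fun μ hμ h h' => (hf_eval μ).trans_le (hspec μ hμ h h')
  have hv : fc 0 * n = 2 * f.eval ((k : ℝ) ^ 2) := by rw [heq, mul_div_cancel₀ _ hf0.ne']
  have hfm : 0 < fc m := hfj m (by have := hw.three_le_length; omega) (by omega)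
  rw [Fintype.card_fin] at hlower
  linarith

/-- If equality holds in the linear programming bound and all coefficients are positive,
then the girth of `Γ` is at least `2t+2`. -/
theorem stmt1 (k t n : ℕ) (hk : 2 ≤ k)
    (Γ : SimpleGraph (Fin n)) [DecidableRel Γ.Adj]
    (hconn : Γ.Connected) (hbip : Γ.Colorable 2) (hreg : Γ.IsRegularOfDegree k)
    (fc : ℕ → ℝ) (hf0 : 0 < fc 0) (hfj : ∀ j, 1 ≤ j → j ≤ t → 0 < fc j)
    (𝓕 : ℕ → Polynomial ℝ) (h𝓕 : ∀ i, (𝓕 i).comp (X ^ 2) = Fpoly (k : ℝ) (2 * i))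
    (hfk : 0 < (∑ i ∈ Finset.range (t + 1), C (fc i) * 𝓕 i).eval ((k : ℝ) ^ 2))
    (hspec : ∀ μ ∈ spectrum ℝ (Γ.adjMatrix ℝ), μ ≠ (k : ℝ) → μ ≠ -(k : ℝ) →
      (∑ i ∈ Finset.range (t + 1), C (fc i) * 𝓕 i).eval (μ ^ 2) ≤ 0)
    (heq : (n : ℝ) = 2 * (∑ i ∈ Finset.range (t + 1), C (fc i) * 𝓕 i).eval ((k : ℝ) ^ 2) / fc 0) :
    ((2 * t + 2 : ℕ) : ℕ∞) ≤ Γ.egirth :=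
  stmt1_general k t n Γ hconn hbip hreg fc hf0 hfj 𝓕 h𝓕 hfk hspec heq
end

section
/- Let k ≥ 2 and t ≥ 4 be integers and let c be a real number. Then the characteristic polynomial of the matrix B(k,t,c) satisfies det(x·I − B(k,t,c)) = (x²−k²)·((c−1)·G_{t−4}(x) + G_{t−2}(x)) as polynomials in x. -/
open Polynomial Matrix

/-- The `t × t` tridiagonal matrix `B(k,t,c)` with zero main diagonal,
subdiagonal `(1,…,1,c,k)` and superdiagonal `(k,k-1,…,k-1,k-c)`. -/
def Bmat (k : ℝ) (t : ℕ) (c : ℝ) : Matrix (Fin t) (Fin t) ℝ :=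
  Matrix.of fun i j =>
    if (j : ℕ) + 1 = (i : ℕ) then
      (if (i : ℕ) = t - 1 then k else if (i : ℕ) = t - 2 then c else 1)
    else if (i : ℕ) + 1 = (j : ℕ) then
      (if (i : ℕ) = 0 then k else if (j : ℕ) = t - 1 then k - c else k - 1)
    else 0

section Tri

variable {R : Type*} [CommRing R]

/-- auxiliary: matrix of size `n` built from an entry function on `ℕ`. -/
def triM (f : ℕ → ℕ → R) (n : ℕ) : Matrix (Fin n) (Fin n) R :=
  Matrix.of fun i j => f (i : ℕ) (j : ℕ)

lemma triM_det_rec (f : ℕ → ℕ → R)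
    (h0 : ∀ i j : ℕ, i ≠ j → i + 1 ≠ j → j + 1 ≠ i → f i j = 0) (n : ℕ) :
    (triM f (n+2)).det = f (n+1) (n+1) * (triM f (n+1)).det
      - f n (n+1) * f (n+1) n * (triM f n).det := by
  rw [det_succ_row (triM f (n+2)) (Fin.last (n+1))]
  rw [Finset.sum_eq_add_of_mem (⟨n, by omega⟩ : Fin (n+2)) (Fin.last (n+1))
      (Finset.mem_univ _) (Finset.mem_univ _)
      (by simp [Fin.ext_iff])
      (by
        rintro c - ⟨hc1, hc2⟩
        have h1 : (c : ℕ) ≠ n := fun h => hc1 (Fin.ext h)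
        have h2 : (c : ℕ) ≠ n + 1 := fun h => hc2 (Fin.ext (by simp [h]))
        have : f (n+1) (c : ℕ) = 0 := h0 _ _ (by omega) (by omega) (by omega)
        simp [triM, this])]
  have e1 : ((triM f (n+2)).submatrix (Fin.last (n+1)).succAbove
      (Fin.last (n+1)).succAbove) = triM f (n+1) := by
    ext i j; simp [triM, Fin.succAbove_last]
  have hp : ((⟨n, by omega⟩ : Fin (n+2)).succAbove (Fin.last n)) = Fin.last (n+1) := by
    rw [Fin.succAbove_of_le_castSucc _ _ (by simp [Fin.le_def]), Fin.succ_last]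
  have e2 : ((triM f (n+2)).submatrix (Fin.last (n+1)).succAbove
      (⟨n, by omega⟩ : Fin (n+2)).succAbove).det = f n (n+1) * (triM f n).det := by
    set S := (triM f (n+2)).submatrix (Fin.last (n+1)).succAbove
      (⟨n, by omega⟩ : Fin (n+2)).succAbove with hS
    rw [det_succ_column S (Fin.last n)]
    rw [Finset.sum_eq_single_of_mem (Fin.last n) (Finset.mem_univ _)
      (by
        intro i _ hi
        have h1 : (i : ℕ) ≠ n := fun h => hi (Fin.ext h)
        have h2 : (i : ℕ) < n + 1 := i.isLt
        have : f (i : ℕ) (n+1) = 0 := h0 _ _ (by omega) (by omega) (by omega)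
        simp [hS, triM, hp, this])]
    have hrow : S (Fin.last n) (Fin.last n) = f n (n+1) := by
      simp [hS, triM, hp, Fin.succAbove_last]
    have hsub : S.submatrix (Fin.last n).succAbove (Fin.last n).succAbove = triM f n := by
      ext i j
      have hcol : ((⟨n, by omega⟩ : Fin (n+2)).succAbove (Fin.castSucc j)) =
          Fin.castSucc (Fin.castSucc j) := by
        apply Fin.succAbove_of_castSucc_lt
        simp [Fin.lt_def]
      simp [hS, triM, Fin.succAbove_last, hcol]
    rw [hrow, hsub]
    have : ((-1 : R)) ^ ((Fin.last n : ℕ) + (Fin.last n : ℕ)) = 1 :=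
      Even.neg_one_pow ⟨n, by simp⟩
    rw [this]; ring
  rw [e1, e2]
  have h1 : ((-1 : R)) ^ ((Fin.last (n+1) : ℕ) + ((⟨n, by omega⟩ : Fin (n+2)) : ℕ)) = -1 :=
    Odd.neg_one_pow ⟨n, by simp; ring⟩
  have h2 : ((-1 : R)) ^ ((Fin.last (n+1) : ℕ) + (Fin.last (n+1) : ℕ)) = 1 :=
    Even.neg_one_pow ⟨n+1, by simp⟩
  rw [h1, h2]
  have e3 : triM f (n + 2) (Fin.last (n+1)) (⟨n, by omega⟩ : Fin (n+2)) = f (n+1) n := by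
    simp [triM]
  have e4 : triM f (n + 2) (Fin.last (n+1)) (Fin.last (n+1)) = f (n+1) (n+1) := by
    simp [triM]
  rw [e3, e4]; ring

end Tri

lemma Gsplit (k : ℝ) (n : ℕ) : Gpoly k (n+2) = Fpoly k (n+2) + Gpoly k n := by
  unfold Gpoly
  have h : (n+2)/2 + 1 = (n/2 + 1) + 1 := by omega
  rw [h, Finset.sum_range_succ']
  rw [add_comm]
  congr 1
  apply Finset.sum_congr rfl
  intro j _
  congr 1
  omega

lemma keyFG (k : ℝ) (n : ℕ) : C k * Fpoly k (n+2) - C (k-1) * X * Fpoly k (n+1)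
    = (X^2 - C (k^2)) * Gpoly k n := by
  induction n using Nat.twoStepInduction with
  | zero =>
    have hg : Gpoly k 0 = 1 := by simp [Gpoly, Fpoly]
    rw [hg]
    simp only [Fpoly, map_sub, Polynomial.C_1, map_pow]
    ring
  | one =>
    have h3 : Fpoly k 3 = X * Fpoly k 2 - C (k - 1) * Fpoly k 1 := rfl
    have hg : Gpoly k 1 = X := by simp [Gpoly, Fpoly]
    rw [h3, hg]
    simp only [Fpoly, map_sub, Polynomial.C_1, map_pow]
    ring
  | more n ih _ =>
    have r4 : Fpoly k (n+4) = X * Fpoly k (n+3) - C (k - 1) * Fpoly k (n+2) := rfl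
    have r3 : Fpoly k (n+3) = X * Fpoly k (n+2) - C (k - 1) * Fpoly k (n+1) := rfl
    rw [Gsplit, show n+2+2 = n+4 from rfl, r4, r3]
    simp only [map_sub, Polynomial.C_1, map_pow] at ih ⊢
    linear_combination ih

/-- entry function of the characteristic matrix of `Bmat`. -/
noncomputable def cf (k c : ℝ) (t : ℕ) (i j : ℕ) : Polynomial ℝ :=
  if i = j then X
  else if j + 1 = i then -C (if i = t-1 then k else if i = t-2 then c else 1)
  else if i + 1 = j then -C (if i = 0 then k else if j = t-1 then k - c else k - 1)
  else 0

lemma cf_tri (k c : ℝ) (t : ℕ) :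
    ∀ i j : ℕ, i ≠ j → i + 1 ≠ j → j + 1 ≠ i → cf k c t i j = 0 := by
  intro i j h1 h2 h3
  simp [cf, h1, fun h => h3 h, fun h => h2 h]

lemma charmatrix_eq (k c : ℝ) (t : ℕ) :
    charmatrix (Bmat k t c) = triM (cf k c t) t := by
  ext i j
  by_cases h : i = j
  · subst h
    rw [charmatrix_apply_eq]
    have hB : Bmat k t c i i = 0 := by simp [Bmat]
    simp [hB, triM, cf]
  · rw [charmatrix_apply_ne _ _ _ h]
    have hv : (i : ℕ) ≠ (j : ℕ) := fun hh => h (Fin.ext hh)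
    simp only [triM, Matrix.of_apply, cf, if_neg hv, Bmat]
    by_cases h1 : (j : ℕ) + 1 = (i : ℕ)
    · simp [h1]
    · by_cases h2 : (i : ℕ) + 1 = (j : ℕ) <;> simp [h1, h2]

lemma detF (k c : ℝ) (t : ℕ) (ht : 4 ≤ t) :
    ∀ n, n ≤ t - 2 → (triM (cf k c t) n).det = Fpoly k n := by
  intro n
  induction n using Nat.strong_induction_on with
  | _ n ih =>
    match n with
    | 0 => intro _; simp [triM, Fpoly]
    | 1 =>
      intro _
      rw [Matrix.det_fin_one]
      simp [triM, cf, Fpoly]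
    | (m+2) =>
      intro h
      rw [triM_det_rec _ (cf_tri k c t) m, ih (m+1) (by omega) (by omega),
        ih m (by omega) (by omega)]
      have hd : cf k c t (m+1) (m+1) = X := by simp [cf]
      have hsub : cf k c t (m+1) m = -1 := by
        unfold cf
        rw [if_neg (show ¬(m+1 = m) by omega), if_pos (show m+1 = m+1 from rfl),
          if_neg (show ¬(m+1 = t-1) by omega), if_neg (show ¬(m+1 = t-2) by omega)]
        simp
      have hsup : cf k c t m (m+1) =
          -C (if m = 0 then k else k - 1) := by
        unfold cf
        rw [if_neg (show ¬(m = m+1) by omega), if_neg (show ¬(m+1+1 = m) by omega),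
          if_pos (show m+1 = m+1 from rfl), if_neg (show ¬(m+1 = t-1) by omega)]
      rw [hd, hsub, hsup]
      match m with
      | 0 => simp [Fpoly]; ring
      | (p+1) =>
        have hF : Fpoly k (p+3) = X * Fpoly k (p+2) - C (k - 1) * Fpoly k (p+1) := rfl
        rw [if_neg (show ¬(p+1 = 0) by omega), hF]
        ring

/-- The characteristic polynomial of `B(k,t,c)` equals
`(x² - k²)((c-1) G_{t-4}(x) + G_{t-2}(x))`. -/
theorem stmt2 (k t : ℕ) (hk : 2 ≤ k) (ht : 4 ≤ t) (c : ℝ) :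
    (Bmat (k : ℝ) t c).charpoly =
      (X ^ 2 - C ((k : ℝ) ^ 2)) * (C (c - 1) * Gpoly (k : ℝ) (t - 4) + Gpoly (k : ℝ) (t - 2)) := by
  obtain ⟨s, rfl⟩ : ∃ s, t = s + 4 := ⟨t - 4, by omega⟩
  rw [Matrix.charpoly, charmatrix_eq]
  have h0 := cf_tri (k : ℝ) c (s+4)
  rw [show s + 4 = (s+2) + 2 from rfl, triM_det_rec _ h0 (s+2),
    triM_det_rec _ h0 (s+1),
    detF (k : ℝ) c (s+4) (by omega) (s+2) (by omega),
    detF (k : ℝ) c (s+4) (by omega) (s+1) (by omega)]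
  have e1 : cf (k : ℝ) c (s+4) (s+3) (s+3) = X := by simp [cf]
  have e2 : cf (k : ℝ) c (s+4) (s+2) (s+3) = -C ((k : ℝ) - c) := by
    unfold cf
    rw [if_neg (show ¬(s+2 = s+3) by omega), if_neg (show ¬(s+3+1 = s+2) by omega),
      if_pos (show s+2+1 = s+3 by omega), if_neg (show ¬(s+2 = 0) by omega),
      if_pos (show s+3 = s+4-1 by omega)]
  have e3 : cf (k : ℝ) c (s+4) (s+3) (s+2) = -C ((k : ℝ)) := by
    unfold cf
    rw [if_neg (show ¬(s+3 = s+2) by omega), if_pos (show s+2+1 = s+3 by omega),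
      if_pos (show s+3 = s+4-1 by omega)]
  have e4 : cf (k : ℝ) c (s+4) (s+2) (s+2) = X := by simp [cf]
  have e5 : cf (k : ℝ) c (s+4) (s+1) (s+2) = -C ((k : ℝ) - 1) := by
    unfold cf
    rw [if_neg (show ¬(s+1 = s+2) by omega), if_neg (show ¬(s+2+1 = s+1) by omega),
      if_pos (show s+1+1 = s+2 by omega), if_neg (show ¬(s+1 = 0) by omega),
      if_neg (show ¬(s+2 = s+4-1) by omega)]
  have e6 : cf (k : ℝ) c (s+4) (s+2) (s+1) = -C c := by
    unfold cf
    rw [if_neg (show ¬(s+2 = s+1) by omega), if_pos (show s+1+1 = s+2 by omega),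
      if_neg (show ¬(s+2 = s+4-1) by omega), if_pos (show s+2 = s+4-2 by omega)]
  rw [e1, e2, e3, e4, e5, e6]
  have hK := keyFG (k : ℝ) s
  have hG := Gsplit (k : ℝ) s
  have ht4 : s + 4 - 4 = s := by omega
  have ht2 : s + 4 - 2 = s + 2 := by omega
  rw [ht4, ht2, hG]
  simp only [map_sub, Polynomial.C_1, map_pow] at hK ⊢
  linear_combination (C c + 1 - 1) * hK
end

section
/- For every integer k ≥ 2, the union over all integers j ≥ 1 of the half-open intervals (λ^{(j)}, λ^{(j+1)}] equals the interval (0, 2√(k−1)), where λ^{(j)} denotes the largest real zero of G_j. -/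
open Polynomial Matrix

lemma Gpoly_zero (k : ℝ) : Gpoly k 0 = 1 := by simp [Gpoly, Fpoly]

lemma Gpoly_one (k : ℝ) : Gpoly k 1 = X := by simp [Gpoly, Fpoly]

lemma Gpoly_succ_succ (k : ℝ) (n : ℕ) :
    Gpoly k (n + 2) = Gpoly k n + Fpoly k (n + 2) := by
  unfold Gpoly
  have h : (n + 2) / 2 + 1 = (n / 2 + 1) + 1 := by omega
  rw [h, Finset.sum_range_succ']
  congr 1
  · apply Finset.sum_congr rfl
    intro j hj
    have := Finset.mem_range.mp hj
    congr 1
    omega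

lemma Gpoly_rec (k : ℝ) :
    ∀ n, Gpoly k (n + 2) = X * Gpoly k (n + 1) - C (k - 1) * Gpoly k n := by
  intro n
  induction n using Nat.strong_induction_on with
  | _ n ih =>
    match n with
    | 0 =>
      rw [Gpoly_succ_succ, Gpoly_zero, Gpoly_one]
      show (1 : ℝ[X]) + (X ^ 2 - C k) = X * X - C (k - 1) * 1
      rw [C_sub, C_1]
      ring
    | 1 =>
      rw [Gpoly_succ_succ, Gpoly_one]
      have h2 : Gpoly k 2 = Gpoly k 0 + Fpoly k 2 := Gpoly_succ_succ k 0
      rw [Gpoly_zero] at h2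
      rw [h2]
      show X + (X * Fpoly k 2 - C (k - 1) * Fpoly k 1) = _
      show X + (X * (X ^ 2 - C k) - C (k - 1) * X) = X * (1 + (X ^ 2 - C k)) - C (k - 1) * X
      ring
    | (m + 2) =>
      have e4 : Gpoly k (m + 4) = Gpoly k (m + 2) + Fpoly k (m + 4) := Gpoly_succ_succ k (m + 2)
      have e3 : Gpoly k (m + 3) = Gpoly k (m + 1) + Fpoly k (m + 3) := Gpoly_succ_succ k (m + 1)
      have e2 : Gpoly k (m + 2) = Gpoly k m + Fpoly k (m + 2) := Gpoly_succ_succ k m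
      have hF : Fpoly k (m + 4) = X * Fpoly k (m + 3) - C (k - 1) * Fpoly k (m + 2) := rfl
      have ihm := ih m (by omega)
      show Gpoly k (m + 4) = X * Gpoly k (m + 3) - C (k - 1) * Gpoly k (m + 2)
      rw [e4, e3, hF]
      linear_combination ihm + C (k - 1) * e2

lemma Gpoly_eval_cos (k s : ℝ) (hs : s ^ 2 = k - 1) :
    ∀ n : ℕ, ∀ θ : ℝ, Real.sin θ * (Gpoly k n).eval (2 * s * Real.cos θ)
      = s ^ n * Real.sin (((n : ℝ) + 1) * θ) := by
  intro n
  induction n using Nat.strong_induction_on with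
  | _ n ih =>
    match n with
    | 0 =>
      intro θ
      simp [Gpoly_zero]
    | 1 =>
      intro θ
      rw [Gpoly_one]
      push_cast
      rw [show ((1 : ℝ) + 1) * θ = 2 * θ by ring, Real.sin_two_mul]
      simp
      ring
    | (m + 2) =>
      intro θ
      have h1 := ih (m + 1) (by omega) θ
      have h0 := ih m (by omega) θ
      rw [Gpoly_rec]
      simp only [eval_sub, eval_mul, eval_X, eval_C]
      push_cast at h1 h0 ⊢
      have key : Real.sin (((m : ℝ) + 2 + 1) * θ)
          = Real.sin (((m : ℝ) + 1 + 1) * θ) * Real.cos θ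
            + Real.cos (((m : ℝ) + 1 + 1) * θ) * Real.sin θ := by
        rw [← Real.sin_add]
        ring_nf
      have key0 : Real.sin (((m : ℝ) + 1) * θ)
          = Real.sin (((m : ℝ) + 1 + 1) * θ) * Real.cos θ
            - Real.cos (((m : ℝ) + 1 + 1) * θ) * Real.sin θ := by
        rw [← Real.sin_sub]
        ring_nf
      rw [key]
      linear_combination (2 * s * Real.cos θ) * h1 - (k - 1) * h0
        + (s ^ m * Real.sin (((m : ℝ) + 1) * θ)) * hs - s ^ (m + 2) * key0

lemma Gpoly_pos_of_big (k s x : ℝ) (hs : s ^ 2 = k - 1) (hs0 : 0 < s) (hx : 2 * s ≤ x) :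
    ∀ n, 0 < (Gpoly k n).eval x ∧
      s * (Gpoly k n).eval x ≤ (Gpoly k (n + 1)).eval x := by
  intro n
  induction n with
  | zero =>
    rw [Gpoly_zero, Gpoly_one]
    constructor
    · simp
    · simp
      linarith
  | succ m ih =>
    obtain ⟨h0, h1⟩ := ih
    have hpos : 0 < (Gpoly k (m + 1)).eval x := lt_of_lt_of_le (by positivity) h1
    refine ⟨hpos, ?_⟩
    rw [Gpoly_rec]
    simp only [eval_sub, eval_mul, eval_X, eval_C]
    nlinarith [mul_nonneg (sub_nonneg.2 hx) hpos.le, mul_nonneg hs0.le (sub_nonneg.2 h1)]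

lemma Gpoly_root (k s : ℝ) (hs : s ^ 2 = k - 1) (j : ℕ) (hj : 1 ≤ j) :
    (Gpoly k j).eval (2 * s * Real.cos (Real.pi / ((j : ℝ) + 1))) = 0 := by
  have hj1 : (1 : ℝ) ≤ (j : ℝ) := by exact_mod_cast hj
  have hθpos : 0 < Real.pi / ((j : ℝ) + 1) := by
    apply div_pos Real.pi_pos; linarith
  have hθlt : Real.pi / ((j : ℝ) + 1) < Real.pi := by
    rw [div_lt_iff₀ (by linarith)]
    nlinarith [Real.pi_pos]
  have hsin : 0 < Real.sin (Real.pi / ((j : ℝ) + 1)) :=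
    Real.sin_pos_of_pos_of_lt_pi hθpos hθlt
  have h := Gpoly_eval_cos k s hs j (Real.pi / ((j : ℝ) + 1))
  rw [show ((j : ℝ) + 1) * (Real.pi / ((j : ℝ) + 1)) = Real.pi by field_simp] at h
  rw [Real.sin_pi, mul_zero] at h
  rcases mul_eq_zero.mp h with h' | h'
  · exact absurd h' (ne_of_gt hsin)
  · exact h'

lemma Gpoly_pos_of_gt (k s : ℝ) (hs : s ^ 2 = k - 1) (hs0 : 0 < s) (j : ℕ) (hj : 1 ≤ j)
    (x : ℝ) (hx : 2 * s * Real.cos (Real.pi / ((j : ℝ) + 1)) < x) :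
    0 < (Gpoly k j).eval x := by
  have hj1 : (1 : ℝ) ≤ (j : ℝ) := by exact_mod_cast hj
  have hθpos : 0 < Real.pi / ((j : ℝ) + 1) := by
    apply div_pos Real.pi_pos; linarith
  have hθle : Real.pi / ((j : ℝ) + 1) ≤ Real.pi / 2 := by
    apply div_le_div_of_nonneg_left Real.pi_pos.le (by norm_num)
    linarith
  have hθlt : Real.pi / ((j : ℝ) + 1) < Real.pi := by
    linarith [Real.pi_pos]
  by_cases hbig : 2 * s ≤ x
  · exact (Gpoly_pos_of_big k s x hs hs0 hbig j).1
  · push_neg at hbig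
    set c : ℝ := x / (2 * s) with hc
    have h2s : 0 < 2 * s := by linarith
    have hc1 : c < 1 := by
      rw [hc, div_lt_one h2s]; exact hbig
    have hcos_lt : Real.cos (Real.pi / ((j : ℝ) + 1)) < c := by
      rw [hc, lt_div_iff₀ h2s]
      linarith [hx]
    have hcm1 : -1 ≤ Real.cos (Real.pi / ((j : ℝ) + 1)) := Real.neg_one_le_cos _
    have hcmem : c ∈ Set.Icc (-1 : ℝ) 1 := ⟨by linarith, hc1.le⟩
    set θ := Real.arccos c with hθ
    have hcosθ : Real.cos θ = c := Real.cos_arccos hcmem.1 hcmem.2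
    have hθ0 : 0 < θ := Real.arccos_pos.2 hc1
    have hθub : θ < Real.pi / ((j : ℝ) + 1) := by
      have := Real.strictAntiOn_arccos
        ⟨hcm1, Real.cos_le_one _⟩ hcmem hcos_lt
      rwa [Real.arccos_cos hθpos.le hθlt.le] at this
    have hxeq : x = 2 * s * Real.cos θ := by
      rw [hcosθ, hc]; field_simp
    have hsinθ : 0 < Real.sin θ :=
      Real.sin_pos_of_pos_of_lt_pi hθ0 (by linarith)
    have hjθ : 0 < ((j : ℝ) + 1) * θ := by positivity
    have hjθlt : ((j : ℝ) + 1) * θ < Real.pi := by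
      have : ((j : ℝ) + 1) * θ < ((j : ℝ) + 1) * (Real.pi / ((j : ℝ) + 1)) := by
        apply mul_lt_mul_of_pos_left hθub; linarith
      rwa [mul_div_cancel₀ _ (by linarith : ((j : ℝ) + 1) ≠ 0)] at this
    have hsinjθ : 0 < Real.sin (((j : ℝ) + 1) * θ) :=
      Real.sin_pos_of_pos_of_lt_pi hjθ hjθlt
    have h := Gpoly_eval_cos k s hs j θ
    rw [← hxeq] at h
    have hmul : 0 < Real.sin θ * (Gpoly k j).eval x := by
      rw [h]; positivity
    rcases mul_pos_iff.mp hmul with ⟨_, h'⟩ | ⟨h', _⟩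
    · exact h'
    · exact absurd h' (not_lt.2 hsinθ.le)

/-- The union over `j ≥ 1` of the intervals `(λ^{(j)}, λ^{(j+1)}]`, where `λ^{(j)}` is the
largest real zero of `G_j`, equals `(0, 2√(k-1))`. -/
theorem stmt4 (k : ℕ) (hk : 2 ≤ k) (lam : ℕ → ℝ)
    (hlam : ∀ j, 1 ≤ j → IsGreatest {x : ℝ | (Gpoly (k : ℝ) j).eval x = 0} (lam j)) :
    (⋃ j ∈ Set.Ici 1, Set.Ioc (lam j) (lam (j + 1))) =
      Set.Ioo (0 : ℝ) (2 * Real.sqrt ((k : ℝ) - 1)) := by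
  classical
  set s : ℝ := Real.sqrt ((k : ℝ) - 1) with hsdef
  have hk1 : (1 : ℝ) ≤ (k : ℝ) - 1 := by
    have : (2 : ℝ) ≤ (k : ℝ) := by exact_mod_cast hk
    linarith
  have hs : s ^ 2 = (k : ℝ) - 1 := Real.sq_sqrt (by linarith)
  have hs0 : 0 < s := Real.sqrt_pos.2 (by linarith)
  have hlam_eq : ∀ j : ℕ, 1 ≤ j → lam j = 2 * s * Real.cos (Real.pi / ((j : ℝ) + 1)) := by
    intro j hj
    obtain ⟨hmem, hub⟩ := hlam j hj
    refine le_antisymm ?_ (hub (Gpoly_root (k : ℝ) s hs j hj))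
    by_contra h
    push_neg at h
    exact (ne_of_gt (Gpoly_pos_of_gt (k : ℝ) s hs hs0 j hj (lam j) h)) hmem
  ext x
  simp only [Set.mem_iUnion, Set.mem_Ioc, Set.mem_Ioo, Set.mem_Ici, exists_prop]
  constructor
  · rintro ⟨j, hj, h1, h2⟩
    have hj1 : (1 : ℝ) ≤ (j : ℝ) := by exact_mod_cast hj
    rw [hlam_eq j hj] at h1
    rw [hlam_eq (j + 1) (by omega)] at h2
    constructor
    · have hcos0 : 0 ≤ Real.cos (Real.pi / ((j : ℝ) + 1)) := by
        apply Real.cos_nonneg_of_mem_Icc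
        constructor
        · have := Real.pi_pos
          have : 0 ≤ Real.pi / ((j : ℝ) + 1) := by positivity
          linarith [Real.pi_pos]
        · apply div_le_div_of_nonneg_left Real.pi_pos.le (by norm_num)
          linarith
      nlinarith [h1, hs0]
    · have hcos1 : Real.cos (Real.pi / ((j : ℝ) + 1 + 1)) < 1 := by
        have h0 : 0 < Real.pi / ((j : ℝ) + 1 + 1) := by
          apply div_pos Real.pi_pos; linarith
        have hle : Real.pi / ((j : ℝ) + 1 + 1) ≤ Real.pi := by
          rw [div_le_iff₀ (by linarith)]
          nlinarith [Real.pi_pos]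
        calc Real.cos (Real.pi / ((j : ℝ) + 1 + 1)) < Real.cos 0 :=
              Real.cos_lt_cos_of_nonneg_of_le_pi le_rfl hle h0
          _ = 1 := Real.cos_zero
      have : ((j : ℝ) + 1 : ℝ) + 1 = ((j + 1 : ℕ) : ℝ) + 1 := by push_cast; ring
      rw [this] at hcos1
      nlinarith [h2, hs0]
  · rintro ⟨hx0, hx2s⟩
    have hex : ∃ m : ℕ, 1 ≤ m ∧ x ≤ 2 * s * Real.cos (Real.pi / ((m : ℝ) + 1 + 1)) := by
      set ε : ℝ := 1 - x / (2 * s) with hε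
      have h2s : 0 < 2 * s := by linarith
      have hεpos : 0 < ε := by
        rw [hε]
        have : x / (2 * s) < 1 := (div_lt_one h2s).2 hx2s
        linarith
      obtain ⟨N, hN⟩ := exists_nat_gt (Real.pi ^ 2 / (2 * ε))
      refine ⟨N + 1, by omega, ?_⟩
      have hc : 1 - ε ≤ Real.cos (Real.pi / ((N + 1 : ℕ) + 1 + 1 : ℝ)) := by
        have hM : (Real.pi ^ 2) / (2 * ε) < ((N : ℝ) + 2) := by
          push_cast; linarith
        have hMb : (2 : ℝ) ≤ (N : ℝ) + 2 := by linarith [Nat.cast_nonneg (α := ℝ) N]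
        have hb := Real.one_sub_sq_div_two_le_cos
          (x := Real.pi / ((N + 1 : ℕ) + 1 + 1 : ℝ))
        push_cast at hb ⊢
        have hNpos : (0 : ℝ) < (N : ℝ) + 1 + 1 + 1 := by positivity
        have hsq : (Real.pi / ((N : ℝ) + 1 + 1 + 1)) ^ 2 ≤ Real.pi ^ 2 / ((N : ℝ) + 2) := by
          rw [div_pow]
          apply div_le_div_of_nonneg_left (by positivity) (by linarith)
          nlinarith
        have : Real.pi ^ 2 / ((N : ℝ) + 2) ≤ 2 * ε := by
          rw [div_le_iff₀ (by linarith)]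
          have := (div_lt_iff₀ (by positivity : (0:ℝ) < 2 * ε)).mp hM
          linarith
        linarith
      have : x / (2 * s) ≤ Real.cos (Real.pi / ((N + 1 : ℕ) + 1 + 1 : ℝ)) := by
        rw [hε] at hc; linarith
      calc x = 2 * s * (x / (2 * s)) := by field_simp
        _ ≤ 2 * s * Real.cos (Real.pi / ((N + 1 : ℕ) + 1 + 1 : ℝ)) := by
            apply mul_le_mul_of_nonneg_left this h2s.le
        _ = 2 * s * Real.cos (Real.pi / (((N + 1 : ℕ) : ℝ) + 1 + 1)) := by norm_num
    set j₀ := Nat.find hex with hj₀def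
    obtain ⟨hj₀1, hj₀le⟩ := Nat.find_spec hex
    have hupper : x ≤ lam (j₀ + 1) := by
      rw [hlam_eq (j₀ + 1) (by omega)]
      have : ((j₀ : ℝ) + 1 + 1) = ((j₀ + 1 : ℕ) : ℝ) + 1 := by push_cast; ring
      rw [← this]
      exact hj₀le
    have hlower : lam j₀ < x := by
      rcases eq_or_lt_of_le hj₀1 with h1 | h1
      · have hj0 : j₀ = 1 := h1.symm
        have hc2 : ((1 : ℕ) : ℝ) + 1 = 2 := by norm_num
        rw [hj0, hlam_eq 1 le_rfl, hc2, Real.cos_pi_div_two, mul_zero]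
        exact hx0
      · have hmin := Nat.find_min hex (m := j₀ - 1)
          (show j₀ - 1 < Nat.find hex by rw [← hj₀def]; omega)
        push_neg at hmin
        have := hmin (by omega)
        rw [hlam_eq j₀ (by omega)]
        have hcast : ((j₀ - 1 : ℕ) : ℝ) + 1 + 1 = (j₀ : ℝ) + 1 := by
          have : ((j₀ - 1 : ℕ) : ℝ) = (j₀ : ℝ) - 1 := by
            have : 1 ≤ j₀ := hj₀1
            push_cast [Nat.cast_sub this]
            ring
          rw [this]; ring
        rw [hcast] at this
        linarith
    exact ⟨j₀, hj₀1, hlower, hupper⟩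
end

section
/- Let k ≥ 2 and t ≥ 5 be integers and let θ be a real number with λ^{(t−4)} < θ ≤ λ^{(t−3)}, where λ^{(j)} is the largest real zero of G_j. Suppose c₁ and c₂ are real numbers with c₁ ≥ k and c₂ ≥ 1 such that (c₁−1)·G_{t−4}(θ) + G_{t−2}(θ) = 0 and (c₂−1)·G_{t−5}(θ) + G_{t−3}(θ) = 0. Then M(k,t,c₁) ≥ M(k,t−1,c₂), and equality holds if and only if c₁ = k and c₂ = 1. -/
open Polynomial Matrix

/-- `M(k,t,c) = 2 (∑_{i=0}^{t-4} (k-1)^i + (k-1)^{t-3}/c + (k-1)^{t-2}/c)`. -/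
noncomputable def Mbound (k t : ℕ) (c : ℝ) : ℝ :=
  2 * ((∑ i ∈ Finset.range (t - 3), ((k : ℝ) - 1) ^ i) +
    ((k : ℝ) - 1) ^ (t - 3) / c + ((k : ℝ) - 1) ^ (t - 2) / c)

lemma Gpoly_add_two (k : ℝ) (n : ℕ) :
    Gpoly k (n + 2) = Fpoly k (n + 2) + Gpoly k n := by
  unfold Gpoly
  have h : (n + 2) / 2 + 1 = (n / 2 + 1) + 1 := by omega
  rw [h, Finset.sum_range_succ']
  rw [add_comm]
  congr 1
  · apply Finset.sum_congr rfl
    intro j _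
    congr 1
    omega

lemma Grec (k : ℝ) (n : ℕ) :
    Gpoly k (n + 2) = X * Gpoly k (n + 1) - C (k - 1) * Gpoly k n := by
  induction n using Nat.twoStepInduction with
  | zero =>
    rw [Gpoly_add_two, Gpoly_zero, Gpoly_one]
    show Fpoly k 2 + 1 = _
    rw [show Fpoly k 2 = X ^ 2 - C k from rfl]
    rw [map_sub, Polynomial.C_1]
    ring
  | one =>
    rw [Gpoly_add_two, Gpoly_add_two, Gpoly_zero, Gpoly_one]
    show Fpoly k 3 + X = X * (Fpoly k 2 + 1) - C (k - 1) * X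
    rw [show Fpoly k 3 = X * Fpoly k 2 - C (k - 1) * Fpoly k 1 from rfl,
        show Fpoly k 1 = X from rfl]
    ring
  | more n ih1 ih2 =>
    rw [Gpoly_add_two k (n + 2)]
    conv_lhs => rw [ih1]
    rw [show Fpoly k (n + 2 + 2) = X * Fpoly k (n + 3) - C (k - 1) * Fpoly k (n + 2) from rfl,
        show Gpoly k (n + 2 + 1) = Fpoly k (n + 3) + Gpoly k (n + 1) from Gpoly_add_two k (n + 1),
        Gpoly_add_two k n]
    ring

lemma Gge (k : ℝ) (hk : 2 ≤ k) (x : ℝ) (hx : k ≤ x) :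
    ∀ n, 1 ≤ (Gpoly k n).eval x ∧ (Gpoly k n).eval x ≤ (Gpoly k (n + 1)).eval x := by
  intro n
  induction n with
  | zero => simp [Gpoly_zero, Gpoly_one]; linarith
  | succ n ih =>
    obtain ⟨h1, h2⟩ := ih
    have hr := Grec k n
    have e : (Gpoly k (n + 2)).eval x = x * (Gpoly k (n + 1)).eval x - (k - 1) * (Gpoly k n).eval x := by
      rw [hr]; simp
    constructor
    · linarith
    · rw [e]; nlinarith

lemma Gneg (k : ℝ) : ∀ n, ∀ x : ℝ, (Gpoly k n).eval (-x) = (-1 : ℝ) ^ n * (Gpoly k n).eval x := by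
  intro n
  induction n using Nat.twoStepInduction with
  | zero => intro x; simp [Gpoly_zero]
  | one => intro x; simp [Gpoly_one]
  | more n ih1 ih2 =>
    intro x
    have e : ∀ y : ℝ, (Gpoly k (n + 2)).eval y = y * (Gpoly k (n + 1)).eval y - (k - 1) * (Gpoly k n).eval y := by
      intro y; rw [Grec k n]; simp
    rw [e, e, ih1 x, ih2 x]
    ring

lemma Gpos (k : ℝ) (hk : 2 ≤ k) (n : ℕ) (lam θ : ℝ)
    (hlam : IsGreatest {x : ℝ | (Gpoly k n).eval x = 0} lam) (hθ : lam < θ) :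
    0 < (Gpoly k n).eval θ := by
  by_contra h
  push_neg at h
  have hz1 : θ ≤ max θ k := le_max_left _ _
  have hz2 : k ≤ max θ k := le_max_right _ _
  have h1 : (1 : ℝ) ≤ (Gpoly k n).eval (max θ k) := (Gge k hk (max θ k) hz2 n).1
  have hiv := intermediate_value_Icc hz1 ((Gpoly k n).continuousOn (s := Set.Icc θ (max θ k)))
  have h0 : (0 : ℝ) ∈ Set.Icc ((Gpoly k n).eval θ) ((Gpoly k n).eval (max θ k)) :=
    ⟨h, by linarith⟩
  obtain ⟨w, hw, hw0⟩ := hiv h0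
  have hle : w ≤ lam := hlam.2 hw0
  linarith [hw.1]

set_option maxHeartbeats 1600000 in
/-- Proposition 4.5: for `λ^{(t-4)} < θ ≤ λ^{(t-3)}`, if `θ` is the second eigenvalue of both
`B(k,t,c₁)` with `c₁ ≥ k` and `B(k,t-1,c₂)` with `c₂ ≥ 1`, then `M(k,t,c₁) ≥ M(k,t-1,c₂)`,
with equality iff `c₁ = k` and `c₂ = 1`. -/
theorem stmt8 (k t : ℕ) (hk : 2 ≤ k) (ht : 5 ≤ t) (θ lamA lamB c₁ c₂ : ℝ)
    (hlamA : IsGreatest {x : ℝ | (Gpoly (k : ℝ) (t - 4)).eval x = 0} lamA)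
    (hlamB : IsGreatest {x : ℝ | (Gpoly (k : ℝ) (t - 3)).eval x = 0} lamB)
    (hθ1 : lamA < θ) (hθ2 : θ ≤ lamB)
    (hc1 : (k : ℝ) ≤ c₁) (hc2 : 1 ≤ c₂)
    (h1 : (c₁ - 1) * (Gpoly (k : ℝ) (t - 4)).eval θ + (Gpoly (k : ℝ) (t - 2)).eval θ = 0)
    (h2 : (c₂ - 1) * (Gpoly (k : ℝ) (t - 5)).eval θ + (Gpoly (k : ℝ) (t - 3)).eval θ = 0) :
    Mbound k t c₁ ≥ Mbound k (t - 1) c₂ ∧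
      (Mbound k t c₁ = Mbound k (t - 1) c₂ ↔ c₁ = (k : ℝ) ∧ c₂ = 1) := by
  obtain ⟨s, rfl⟩ := Nat.exists_eq_add_of_le ht
  have hk2 : (2 : ℝ) ≤ (k : ℝ) := by exact_mod_cast hk
  simp only [show 5 + s - 4 = s + 1 from by omega, show 5 + s - 3 = s + 2 from by omega,
    show 5 + s - 2 = s + 3 from by omega, show 5 + s - 5 = s from by omega] at h1 h2 hlamA hlamB
  set A := (Gpoly (k : ℝ) s).eval θ with hAdef
  set B := (Gpoly (k : ℝ) (s + 1)).eval θ with hBdef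
  -- eval recurrences
  have e2 : (Gpoly (k : ℝ) (s + 2)).eval θ = θ * B - ((k : ℝ) - 1) * A := by
    rw [Grec (k : ℝ) s]; simp [hAdef, hBdef]
  have e3 : (Gpoly (k : ℝ) (s + 3)).eval θ
      = θ * ((Gpoly (k : ℝ) (s + 2)).eval θ) - ((k : ℝ) - 1) * B := by
    rw [show Gpoly (k : ℝ) (s + 3) = Gpoly (k : ℝ) (s + 1 + 2) from rfl, Grec (k : ℝ) (s + 1)]
    simp [hBdef]
  -- positivity of B
  have hB : 0 < B := Gpos (k : ℝ) hk2 (s + 1) lamA θ hlamA hθ1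
  -- θ bounds
  have hθltk : θ < (k : ℝ) := by
    by_contra hcon
    push_neg at hcon
    have h1' : (1 : ℝ) ≤ (Gpoly (k : ℝ) (s + 2)).eval lamB :=
      (Gge (k : ℝ) hk2 lamB (le_trans hcon hθ2) (s + 2)).1
    have := hlamB.1
    simp only [Set.mem_setOf_eq] at this
    linarith
  have hθgtk : -(k : ℝ) < θ := by
    by_contra hcon
    push_neg at hcon
    have hk' : (k : ℝ) ≤ -lamA := by linarith
    have hp := Gneg (k : ℝ) (s + 1) (-lamA)
    rw [neg_neg] at hp
    have h0 : (Gpoly (k : ℝ) (s + 1)).eval lamA = 0 := hlamA.1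
    have h1' : (1 : ℝ) ≤ (Gpoly (k : ℝ) (s + 1)).eval (-lamA) :=
      (Gge (k : ℝ) hk2 (-lamA) hk' (s + 1)).1
    rw [h0] at hp
    have hne : ((-1 : ℝ)) ^ (s + 1) ≠ 0 := pow_ne_zero _ (by norm_num)
    have := mul_eq_zero.mp hp.symm
    rcases this with h | h
    · exact hne h
    · linarith
  have hθ2k : θ ^ 2 < (k : ℝ) ^ 2 := by nlinarith
  -- linear relations
  rw [e3, e2] at h1
  rw [e2] at h2
  have eqA : c₂ * A = (k : ℝ) * A - θ * B := by linear_combination h2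
  have eqB : c₁ * B = (k : ℝ) * B - θ ^ 2 * B + θ * ((k : ℝ) - 1) * A := by
    linear_combination h1
  set Φ := c₁ * c₂ + ((k : ℝ) - 1) * (k : ℝ) * c₂ - (k : ℝ) * c₁ with hΦdef
  have key : Φ * A = ((k : ℝ) ^ 2 - θ ^ 2) * (((k : ℝ) - 1) * A - θ * B) := by
    linear_combination (c₁ + ((k : ℝ) - 1) * (k : ℝ)) * eqA - θ * eqB
  have hΦ : 0 ≤ Φ ∧ (Φ = 0 ↔ (c₁ = (k : ℝ) ∧ c₂ = 1)) := by
    by_cases hA : A = 0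
    · have hθB : θ * B = 0 := by rw [hA] at eqA; linarith [eqA]
      have hθ0 : θ = 0 := by
        rcases mul_eq_zero.mp hθB with h | h
        · exact h
        · exact absurd h (ne_of_gt hB)
      have hc1k : c₁ = (k : ℝ) := by
        rw [hθ0, hA] at eqB
        have := mul_right_cancel₀ (ne_of_gt hB) (by linear_combination eqB :
          c₁ * B = (k : ℝ) * B)
        exact this
      have hΦval : Φ = (k : ℝ) ^ 2 * (c₂ - 1) := by
        rw [hΦdef, hc1k]; ring
      constructor
      · rw [hΦval]; nlinarith
      · constructor
        · intro h
          rw [hΦval] at h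
          have : c₂ - 1 = 0 := by
            rcases mul_eq_zero.mp h with h' | h'
            · nlinarith
            · exact h'
          exact ⟨hc1k, by linarith⟩
        · rintro ⟨h1', h2'⟩; rw [hΦval, h2']; ring
    · have hqA : ((k : ℝ) - 1) * A - θ * B = (c₂ - 1) * A := by linear_combination -eqA
      have key2 : Φ = ((k : ℝ) ^ 2 - θ ^ 2) * (c₂ - 1) := by
        apply mul_right_cancel₀ hA
        linear_combination key + ((k : ℝ) ^ 2 - θ ^ 2) * hqA
      have hpos : 0 < (k : ℝ) ^ 2 - θ ^ 2 := by linarith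
      constructor
      · rw [key2]; nlinarith
      · constructor
        · intro h
          rw [key2] at h
          have hc2' : c₂ = 1 := by
            rcases mul_eq_zero.mp h with h' | h'
            · linarith
            · linarith
          have hθA : θ * B = ((k : ℝ) - 1) * A := by
            rw [hc2'] at hqA; linarith [hqA]
          have hc1k : c₁ = (k : ℝ) := by
            apply mul_right_cancel₀ (ne_of_gt hB)
            linear_combination eqB - θ * hθA
          exact ⟨hc1k, hc2'⟩
        · rintro ⟨h1', h2'⟩; rw [hΦdef, h1', h2']; ring
  -- the M bound computation
  have hc₁0 : 0 < c₁ := by linarith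
  have hc₂0 : 0 < c₂ := by linarith
  have hq0 : 0 < (k : ℝ) - 1 := by linarith
  have hM : Mbound k (5 + s) c₁ - Mbound k (5 + s - 1) c₂
      = 2 * ((k : ℝ) - 1) ^ (s + 1) / (c₁ * c₂) * Φ := by
    unfold Mbound
    simp only [show 5 + s - 3 = s + 1 + 1 from by omega, show 5 + s - 2 = s + 3 from by omega,
      show 5 + s - 1 - 3 = s + 1 from by omega, show 5 + s - 1 - 2 = s + 2 from by omega]
    rw [Finset.sum_range_succ]
    rw [hΦdef]
    field_simp
    ring
  have hfac : 0 < 2 * ((k : ℝ) - 1) ^ (s + 1) / (c₁ * c₂) := by positivity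
  constructor
  · have : 0 ≤ 2 * ((k : ℝ) - 1) ^ (s + 1) / (c₁ * c₂) * Φ := mul_nonneg hfac.le hΦ.1
    linarith [hM]
  · constructor
    · intro h
      have hz : 2 * ((k : ℝ) - 1) ^ (s + 1) / (c₁ * c₂) * Φ = 0 := by linarith [hM]
      have : Φ = 0 := by
        rcases mul_eq_zero.mp hz with h' | h'
        · exact absurd h' (ne_of_gt hfac)
        · exact h'
      exact hΦ.2.mp this
    · intro h
      have : Φ = 0 := hΦ.2.mpr h
      rw [this, mul_zero] at hM
      linarith [hM]
end

section
/- Let n ≥ 2 be an integer and let Γ be a connected bipartite n-regular simple graph on 2m vertices. If λ₂(Γ) ≤ √(n−1), then m ≤ 1 + n(n−1)/(n − λ₂(Γ)²). -/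
/-!
A 2-colouring of `Γ` gives a diagonal sign matrix `D` with `D * A * D = -A`, so the adjacency
matrix `A` and `-A` have the same characteristic polynomial and the sorted spectrum is symmetric:
`λ_{2m+1-i} = -λ_i`. Regularity gives `λ₁ = n`, hence `λ_{2m} = -n`, and every other eigenvalue
lies in `[-λ₂, λ₂]`. Comparing with `tr A² = 2mn` yields `2mn ≤ 2n² + (2m - 2)λ₂²`, which
rearranges to the claim because `λ₂² ≤ n - 1 < n`.
-/

open Polynomial Matrix

theorem Polynomial.roots_prod_univ_X_sub_C {R κ : Type*} [CommRing R] [IsDomain R] [Fintype κ]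
    (e : κ → R) : (∏ i, (X - C (e i))).roots = Finset.univ.val.map e := by
  rw [Finset.prod_eq_multiset_prod, ← roots_multiset_prod_X_sub_C (Finset.univ.val.map e),
    Multiset.map_map]
  rfl

namespace Matrix

variable {ι K : Type*} [Fintype ι] [DecidableEq ι]

theorem isRoot_charpoly_iff_exists_mulVec_eq_smul [Field K] (A : Matrix ι ι K) (μ : K) :
    A.charpoly.IsRoot μ ↔ ∃ v ≠ 0, A *ᵥ v = μ • v := by
  rw [IsRoot, eval_charpoly, ← exists_mulVec_eq_zero_iff]
  simp [sub_mulVec, sub_eq_zero, eq_comm]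

theorem charpoly_conj_of_mul_self_eq_one [CommRing K] {D : Matrix ι ι K} (hD : D * D = 1)
    (A : Matrix ι ι K) : (D * A * D).charpoly = A.charpoly := by
  rw [charpoly_mul_comm, ← mul_assoc, hD, one_mul]

theorem trace_eq_sum_of_charpoly_eq_prod [CommRing K] {A : Matrix ι ι K} {κ : Type*} [Fintype κ]
    {e : κ → K} (h : A.charpoly = ∏ i, (X - C (e i))) : A.trace = ∑ i, e i := by
  rw [trace_eq_neg_charpoly_nextCoeff, h, prod_X_sub_C_nextCoeff, neg_neg]

theorem IsHermitian.charpoly_cfc_eq_of_charpoly_eq_prod {A : Matrix ι ι ℝ} (hA : A.IsHermitian)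
    {κ : Type*} [Fintype κ] {e : κ → ℝ} (he : A.charpoly = ∏ i, (X - C (e i))) (f : ℝ → ℝ) :
    (cfc f A).charpoly = ∏ i, (X - C (f (e i))) := by
  have hroots : Finset.univ.val.map hA.eigenvalues = Finset.univ.val.map e := by
    have := congrArg roots (hA.charpoly_eq.symm.trans he)
    simpa only [RCLike.ofReal_real_eq_id, id, roots_prod_univ_X_sub_C] using this
  rw [hA.charpoly_cfc_eq]
  calc ∏ i, (X - C (f (hA.eigenvalues i) : ℝ))
      = ((Finset.univ.val.map hA.eigenvalues).map fun y => X - C (f y)).prod := by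
        rw [Multiset.map_map]; rfl
    _ = ∏ i, (X - C (f (e i))) := by
        rw [hroots, Multiset.map_map]; rfl

end Matrix

theorem Antitone.eq_of_map_univ_val_eq {α : Type*} [LinearOrder α] {N : ℕ} {f g : Fin N → α}
    (hf : Antitone f) (hg : Antitone g)
    (h : Finset.univ.val.map f = Finset.univ.val.map g) : f = g := by
  rw [Fin.univ_val_map, Fin.univ_val_map, Multiset.coe_eq_coe] at h
  exact List.ofFn_injective (h.eq_of_sortedGE hf.sortedGE_ofFn hg.sortedGE_ofFn)

section SymmetricSequence

variable {α : Type*} [AddCommGroup α] [LinearOrder α] [IsOrderedAddMonoid α] {N : ℕ}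
  {e : Fin N → α}

theorem Antitone.rev_eq_neg_of_map_neg (he : Antitone e)
    (h : Finset.univ.val.map (fun i => -e i) = Finset.univ.val.map e) (i : Fin N) :
    e i.rev = -e i := by
  have hrev : Antitone fun i : Fin N => -e i.rev := fun i j hij =>
    neg_le_neg (he (Fin.rev_le_rev.2 hij))
  have hmap : Finset.univ.val.map (fun i : Fin N => -e i.rev) = Finset.univ.val.map e := by
    conv_rhs => rw [← h, ← Multiset.map_univ_val_equiv Fin.revPerm, Multiset.map_map]
    rfl
  simpa using congrFun (he.eq_of_map_univ_val_eq hrev hmap.symm) i.rev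

theorem Antitone.nonneg_of_rev_eq_neg (he : Antitone e) (hsymm : ∀ i, e i.rev = -e i)
    {i : Fin N} (hi : i ≤ i.rev) : 0 ≤ e i := by
  have := he hi
  rw [hsymm] at this
  exact neg_le_self_iff.1 this

end SymmetricSequence

theorem Antitone.sum_sq_le_of_rev_eq_neg {α : Type*} [CommRing α] [LinearOrder α]
    [IsStrictOrderedRing α] {N : ℕ} {e : Fin N → α} (he : Antitone e)
    (hsymm : ∀ i, e i.rev = -e i) (hN : 2 ≤ N) :
    ∑ i, e i ^ 2 ≤ 2 * e ⟨0, by omega⟩ ^ 2 + ((N : α) - 2) * e ⟨1, by omega⟩ ^ 2 := by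
  obtain ⟨k, rfl⟩ : ∃ k, N = k + 2 := ⟨N - 2, by omega⟩
  have hlast : e (Fin.last k).succ = -e 0 := hsymm 0
  have hmiddle (j : Fin k) : e j.castSucc.succ ^ 2 ≤ e 1 ^ 2 := by
    refine sq_le_sq' ?_ (he (Fin.mk_le_mk.2 (by simp)))
    rw [← hsymm]
    exact he (Fin.mk_le_mk.2 (by simp))
  calc ∑ i, e i ^ 2
      = 2 * e 0 ^ 2 + ∑ j : Fin k, e j.castSucc.succ ^ 2 := by
        rw [Fin.sum_univ_succ, Fin.sum_univ_castSucc, hlast]; ring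
    _ ≤ 2 * e 0 ^ 2 + ∑ _j : Fin k, e 1 ^ 2 := by
        gcongr 2 * e 0 ^ 2 + ?_
        exact Finset.sum_le_sum fun j _ => hmiddle j
    _ = 2 * e 0 ^ 2 + ((k + 2 : ℕ) - 2 : α) * e 1 ^ 2 := by simp

namespace SimpleGraph

variable {V : Type*} [Fintype V] (G : SimpleGraph V) [DecidableRel G.Adj]

theorem abs_le_of_adjMatrix_mulVec_eq_smul {d : ℕ} (hdeg : ∀ v, G.degree v ≤ d) {μ : ℝ}
    {x : V → ℝ} (hx : x ≠ 0) (h : G.adjMatrix ℝ *ᵥ x = μ • x) : |μ| ≤ d := by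
  obtain ⟨k, hk⟩ := Function.ne_iff.1 hx
  have : Nonempty V := ⟨k⟩
  obtain ⟨i, hi⟩ := Finite.exists_max fun j => |x j|
  have hxi : 0 < |x i| := (abs_pos.2 hk).trans_le (hi k)
  refine le_of_mul_le_mul_right ?_ hxi
  calc |μ| * |x i| = |∑ j ∈ G.neighborFinset i, x j| := by
        rw [← abs_mul, ← adjMatrix_mulVec_apply, h, Pi.smul_apply, smul_eq_mul]
    _ ≤ ∑ j ∈ G.neighborFinset i, |x j| := Finset.abs_sum_le_sum_abs _ _
    _ ≤ ∑ _j ∈ G.neighborFinset i, |x i| := Finset.sum_le_sum fun j _ => hi j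
    _ ≤ d * |x i| := by
        rw [Finset.sum_const, card_neighborFinset_eq_degree, nsmul_eq_mul]
        gcongr
        exact_mod_cast hdeg i

theorem trace_adjMatrix_mul_self {R : Type*} [NonAssocSemiring R] :
    (G.adjMatrix R * G.adjMatrix R).trace = ∑ v, (G.degree v : R) := by
  simp only [trace, diag_apply, adjMatrix_mul_self_apply_self]

variable [DecidableEq V] {G}

theorem charpoly_neg_adjMatrix {R : Type*} [CommRing R] (hG : G.Colorable 2) :
    (-G.adjMatrix R).charpoly = (G.adjMatrix R).charpoly := by
  obtain ⟨c⟩ := hG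
  set D : Matrix V V R := diagonal fun v => (-1) ^ (c v : ℕ)
  have hD : D * D = 1 := by
    simp [D, diagonal_mul_diagonal, ← mul_pow]
  have hDAD : D * G.adjMatrix R * D = -G.adjMatrix R := by
    ext i j
    simp only [D, mul_diagonal, diagonal_mul]
    by_cases hij : G.Adj i j
    · have hsum : (c i : ℕ) + c j = 1 := by
        have := c.valid hij
        omega
      simp [hij, mul_comm, ← pow_add, hsum]
    · simp [hij]
  rw [← hDAD, charpoly_conj_of_mul_self_eq_one hD]

theorem IsRegularOfDegree.isRoot_charpoly_adjMatrix {K : Type*} [Field K] [Nonempty V] {d : ℕ}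
    (hG : G.IsRegularOfDegree d) : (G.adjMatrix K).charpoly.IsRoot (d : K) := by
  rw [isRoot_charpoly_iff_exists_mulVec_eq_smul]
  refine ⟨Function.const V 1, Function.const_ne_zero.2 one_ne_zero, funext fun v => ?_⟩
  simp [hG v]

variable {N : ℕ} {e : Fin N → ℝ}

theorem adjMatrix_eigenvalues_rev_eq_neg (hG : G.Colorable 2) (he : Antitone e)
    (hchar : (G.adjMatrix ℝ).charpoly = ∏ i, (X - C (e i))) (i : Fin N) : e i.rev = -e i := by
  have hneg : (-G.adjMatrix ℝ).charpoly = ∏ i, (X - C (-e i)) := by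
    rw [← cfc_neg_id (R := ℝ) (G.adjMatrix ℝ) (G.isHermitian_adjMatrix ℝ)]
    exact (G.isHermitian_adjMatrix ℝ).charpoly_cfc_eq_of_charpoly_eq_prod hchar _
  rw [charpoly_neg_adjMatrix hG, hchar] at hneg
  refine he.rev_eq_neg_of_map_neg ?_ i
  simpa only [roots_prod_univ_X_sub_C] using (congrArg roots hneg).symm

theorem IsRegularOfDegree.adjMatrix_eigenvalue_zero_eq [Nonempty V] {d : ℕ}
    (hG : G.IsRegularOfDegree d) (he : Antitone e)
    (hchar : (G.adjMatrix ℝ).charpoly = ∏ i, (X - C (e i))) (h0 : 0 < N) : e ⟨0, h0⟩ = d := by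
  have hne := (charpoly_monic (G.adjMatrix ℝ)).ne_zero
  have hroots : (G.adjMatrix ℝ).charpoly.roots = Finset.univ.val.map e := by
    rw [hchar, roots_prod_univ_X_sub_C]
  obtain ⟨j, -, hj⟩ := Multiset.mem_map.1 <| hroots ▸ (mem_roots hne).2 hG.isRoot_charpoly_adjMatrix
  refine le_antisymm ?_ (hj ▸ he (Fin.mk_le_mk.2 j.val.zero_le))
  obtain ⟨x, hx, hAx⟩ := (isRoot_charpoly_iff_exists_mulVec_eq_smul _ _).1 <|
    (mem_roots hne).1 (hroots ▸ Multiset.mem_map_of_mem e (Finset.mem_univ _))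
  exact (le_abs_self _).trans (G.abs_le_of_adjMatrix_mulVec_eq_smul (fun v => (hG v).le) hx hAx)

theorem IsRegularOfDegree.sum_sq_adjMatrix_eigenvalues {d : ℕ} (hG : G.IsRegularOfDegree d)
    (hchar : (G.adjMatrix ℝ).charpoly = ∏ i, (X - C (e i))) :
    ∑ i, e i ^ 2 = Fintype.card V * d := by
  have hsq : (G.adjMatrix ℝ * G.adjMatrix ℝ).charpoly = ∏ i, (X - C (e i ^ 2)) := by
    rw [← sq, ← cfc_pow_id (R := ℝ) (G.adjMatrix ℝ) 2 (G.isHermitian_adjMatrix ℝ)]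
    exact (G.isHermitian_adjMatrix ℝ).charpoly_cfc_eq_of_charpoly_eq_prod hchar _
  rw [← trace_eq_sum_of_charpoly_eq_prod hsq, trace_adjMatrix_mul_self]
  simp [hG _]

end SimpleGraph

/-- Corollary (Høholdt–Justesen): a connected bipartite `n`-regular graph on `2m` vertices with
second largest adjacency eigenvalue (with multiplicity, given by the antitone enumeration `e`)
at most `√(n-1)` satisfies `m ≤ 1 + n(n-1)/(n - λ₂²)`. -/
theorem stmt9 (n m : ℕ) (hn : 2 ≤ n) (hm : 1 ≤ m)
    (Γ : SimpleGraph (Fin (2 * m))) [DecidableRel Γ.Adj]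
    (hbip : Γ.Colorable 2) (hreg : Γ.IsRegularOfDegree n)
    (e : Fin (2 * m) → ℝ) (hmono : Antitone e)
    (hchar : (Γ.adjMatrix ℝ).charpoly = ∏ i, (X - C (e i)))
    (hlam2 : e ⟨1, by omega⟩ ≤ Real.sqrt ((n : ℝ) - 1)) :
    (m : ℝ) ≤ 1 + (n : ℝ) * ((n : ℝ) - 1) / ((n : ℝ) - (e ⟨1, by omega⟩) ^ 2) := by
  have hm2 : 2 ≤ m := by
    have := Γ.degree_lt_card_verts ⟨0, by omega⟩
    rw [hreg, Fintype.card_fin] at this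
    omega
  have : Nonempty (Fin (2 * m)) := ⟨⟨0, by omega⟩⟩
  have hsymm := Γ.adjMatrix_eigenvalues_rev_eq_neg hbip hmono hchar
  have htop := hreg.adjMatrix_eigenvalue_zero_eq hmono hchar (by omega)
  have hbound := hmono.sum_sq_le_of_rev_eq_neg hsymm (by omega)
  rw [hreg.sum_sq_adjMatrix_eigenvalues hchar, htop, Fintype.card_fin] at hbound
  set l := e ⟨1, by omega⟩
  have hl : 0 ≤ l := hmono.nonneg_of_rev_eq_neg hsymm (Fin.mk_le_mk.2 (by simp; omega))
  have hn' : (2 : ℝ) ≤ n := by exact_mod_cast hn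
  have hl2 : l ^ 2 ≤ n - 1 := (Real.le_sqrt hl (by linarith)).1 hlam2
  rw [← sub_le_iff_le_add', le_div_iff₀ (by linarith)]
  push_cast at hbound
  linarith
end

section
/- Let k ≥ 2 be an integer, let N be a real m×n matrix, and let A be the (m+n)×(m+n) block matrix [[0, N],[Nᵀ, 0]]. Then for every integer i ≥ 0, F_{2i}(A) is the block-diagonal matrix [[𝓕_{0,i}(N·Nᵀ), 0],[0, 𝓕_{0,i}(Nᵀ·N)]]. -/
open Polynomial Matrix

lemma fromBlocks_diag_pow {m n : ℕ} (B : Matrix (Fin m) (Fin m) ℝ)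
    (C : Matrix (Fin n) (Fin n) ℝ) (p : ℕ) :
    (Matrix.fromBlocks B 0 0 C) ^ p = Matrix.fromBlocks (B ^ p) 0 0 (C ^ p) := by
  induction p with
  | zero => simp [Matrix.fromBlocks_one]
  | succ p ih => rw [pow_succ, pow_succ, pow_succ, ih, Matrix.fromBlocks_multiply]; simp

lemma aeval_fromBlocks_diag {m n : ℕ} (B : Matrix (Fin m) (Fin m) ℝ)
    (C : Matrix (Fin n) (Fin n) ℝ) (p : Polynomial ℝ) :
    Polynomial.aeval (Matrix.fromBlocks B 0 0 C) p =
      Matrix.fromBlocks (Polynomial.aeval B p) 0 0 (Polynomial.aeval C p) := by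
  induction p using Polynomial.induction_on' with
  | add p q hp hq =>
    rw [map_add, map_add, map_add, hp, hq, Matrix.fromBlocks_add]; simp
  | monomial d c =>
    simp [Polynomial.aeval_monomial, fromBlocks_diag_pow, Algebra.algebraMap_eq_smul_one,
      smul_mul_assoc, one_mul, Matrix.fromBlocks_smul]

/-- Equation (9): for the bipartite block matrix `A = [[0, N],[Nᵀ, 0]]` one has
`F_{2i}(A) = [[𝓕_{0,i}(N Nᵀ), 0],[0, 𝓕_{0,i}(Nᵀ N)]]`, where `𝓕` is the unique polynomial
with `𝓕(x²) = F_{2i}(x)`. -/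
theorem stmt17 (k : ℕ) (hk : 2 ≤ k) (m n : ℕ) (N : Matrix (Fin m) (Fin n) ℝ) (i : ℕ)
    (𝓕 : Polynomial ℝ) (h𝓕 : 𝓕.comp (X ^ 2) = Fpoly (k : ℝ) (2 * i)) :
    Polynomial.aeval (Matrix.fromBlocks (0 : Matrix (Fin m) (Fin m) ℝ) N Nᵀ 0)
        (Fpoly (k : ℝ) (2 * i)) =
      Matrix.fromBlocks (Polynomial.aeval (N * Nᵀ) 𝓕) 0 0 (Polynomial.aeval (Nᵀ * N) 𝓕) := by
  have hsq : (Matrix.fromBlocks (0 : Matrix (Fin m) (Fin m) ℝ) N Nᵀ 0) ^ 2 =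
      Matrix.fromBlocks (N * Nᵀ) 0 0 (Nᵀ * N) := by
    rw [pow_two, Matrix.fromBlocks_multiply]; simp
  rw [← h𝓕, Polynomial.aeval_comp]
  simp only [map_pow, Polynomial.aeval_X, hsq, aeval_fromBlocks_diag]
end

section
/- Let k ≥ 3 and d ≥ 2 be integers, let c be a real number with 1 < c ≤ k−1, and let v, w be real numbers with π/4 < v < w < π/2. Set α = 4cos²v, β = 4cos²w, X_φ = (c−1)(k−1)φ + (k−c)² for φ ∈ {α, β}, Y = (k−c)(k+c−2), A = ((cos 2v − cos 2w)/(1 − cos 2v)) · ((k−2)²/((k−2)² + 2(k−1)(1 − cos 2w))), B = Y(X_α − X_β)/((d−1)X_α X_β + Y X_α), and L(v,w) = (3√3(d−1)/4)·(1 − 2/k)²·(1 + cos 2v)·sin² 2w. Then A·(1/B − 1) > L(v,w). -/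
open Real
set_option maxHeartbeats 1000000

/-- AM-GM for square roots. -/
lemma amgm18 (x y : ℝ) (hx : 0 ≤ x) (hy : 0 ≤ y) : 2 * Real.sqrt (x * y) ≤ x + y := by
  have h1 : Real.sqrt (x * y) ^ 2 = x * y := Real.sq_sqrt (mul_nonneg hx hy)
  have h2 : 0 ≤ Real.sqrt (x * y) := Real.sqrt_nonneg _
  nlinarith [sq_nonneg (x - y), sq_nonneg (x + y - 2 * Real.sqrt (x * y))]

/-- Core polynomial inequality. -/
lemma core18 (p q s t u r : ℝ) (hp : 0 < p) (hq : 0 < q)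
    (hs1 : s < 1) (ht0 : 0 < t) (hts : t < s) (hu0 : 0 < u) (hu2 : u ^ 2 = s * t)
    (hus : u ≤ s) (hsum : 2 * u ≤ s + t) (hr2 : r ^ 2 = 3) (hr0 : 0 < r) :
    3 * r * (p * (p + q) * (q * (q + 2 * p)) * (((2 - s) * s) * ((2 - t) * t)) *
      (((p + q + 1) - 2) ^ 2 + 2 * ((p + q + 1) - 1) * (2 - t)))
      ≤ 2 * ((p + q + 1) ^ 2 * ((2 * p * (p + q) * s + q ^ 2) * (2 * p * (p + q) * t + q ^ 2))) := by
  have hs0 : 0 < s := lt_trans ht0 hts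
  have hu1 : u < 1 := lt_of_le_of_lt hus hs1
  have hm0 : 0 < p + q := by linarith
  have hK0 : (0:ℝ) < p + q + 1 := by linarith
  -- h1 : (2-s)s(2-t)t ≤ u²(2-u)²
  have hterm1 : 0 ≤ u * u * (s + t - 2 * u) := by
    have : 0 ≤ s + t - 2 * u := by linarith
    positivity
  have haux1 : (u ^ 2 - s * t) * (4 + u ^ 2 + s * t - 2 * s - 2 * t) = 0 := by
    rw [hu2]; ring
  have h1 : ((2 - s) * s) * ((2 - t) * t) ≤ u ^ 2 * (2 - u) ^ 2 := by
    nlinarith [hterm1, haux1]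
  -- h2 : (2pm u + q²)² ≤ XA XB
  have hterm2 : 0 ≤ (p * ((p + q) * q ^ 2)) * (s + t - 2 * u) := by
    have : 0 ≤ s + t - 2 * u := by linarith
    positivity
  have haux2 : (4 * (p * (p + q)) ^ 2) * (s * t - u ^ 2) = 0 := by rw [hu2]; ring
  have h2 : (2 * p * (p + q) * u + q ^ 2) ^ 2
      ≤ (2 * p * (p + q) * s + q ^ 2) * (2 * p * (p + q) * t + q ^ 2) := by
    nlinarith [hterm2, haux2]
  -- h3 : Dexp ≤ K²
  have h3 : ((p + q + 1) - 2) ^ 2 + 2 * ((p + q + 1) - 1) * (2 - t) ≤ (p + q + 1) ^ 2 := by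
    nlinarith [mul_pos hm0 ht0]
  -- h4
  have h4 : (p + q) ^ 2 * (u * (2 - u)) ≤ 2 * p * (p + q) * u + q ^ 2 := by
    nlinarith [sq_nonneg (q - (p + q) * u)]
  -- h5
  have hkey : 2 * (p + q) ^ 3 - 3 * r * (p * q * (q + 2 * p))
      = ((p + q) - r * p) ^ 2 * ((r + 2) * (p + q) - r * q) := by
    linear_combination (-(p ^ 3 * r)) * hr2
  have hfac : 0 ≤ ((p + q) - r * p) ^ 2 * ((r + 2) * (p + q) - r * q) := by
    apply mul_nonneg (sq_nonneg _)
    nlinarith [mul_pos hr0 hp]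
  have h5 : 3 * r * (p * q * (q + 2 * p)) ≤ 2 * (p + q) ^ 3 := by linarith
  -- assemble
  have hDexp0 : 0 ≤ ((p + q + 1) - 2) ^ 2 + 2 * ((p + q + 1) - 1) * (2 - t) := by
    nlinarith [sq_nonneg (p + q - 1), mul_pos hm0 (show (0:ℝ) < 2 - t by linarith)]
  have hU20 : 0 ≤ u ^ 2 * (2 - u) ^ 2 := by positivity
  have hC0 : 0 ≤ 3 * r * (p * (p + q) * (q * (q + 2 * p))) := by
    have h2p : (0:ℝ) < q + 2 * p := by linarith
    have hx := mul_pos (mul_pos hp hm0) (mul_pos hq h2p)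
    nlinarith [mul_pos hr0 hx]
  have hB1 : (((2 - s) * s) * ((2 - t) * t)) *
      (((p + q + 1) - 2) ^ 2 + 2 * ((p + q + 1) - 1) * (2 - t))
      ≤ (u ^ 2 * (2 - u) ^ 2) * (p + q + 1) ^ 2 := mul_le_mul h1 h3 hDexp0 hU20
  have hA1 := mul_le_mul_of_nonneg_left hB1 hC0
  have hX0 : 0 ≤ (p + q) * (u ^ 2 * (2 - u) ^ 2) * (p + q + 1) ^ 2 := by positivity
  have hA2 := mul_le_mul_of_nonneg_right h5 hX0
  have h40 : 0 ≤ (p + q) ^ 2 * (u * (2 - u)) := by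
    have : (0:ℝ) ≤ 2 - u := by linarith
    positivity
  have hsq : ((p + q) ^ 2 * (u * (2 - u))) * ((p + q) ^ 2 * (u * (2 - u)))
      ≤ (2 * p * (p + q) * u + q ^ 2) * (2 * p * (p + q) * u + q ^ 2) :=
    mul_self_le_mul_self h40 h4
  have h2K0 : (0:ℝ) ≤ 2 * (p + q + 1) ^ 2 := by positivity
  have hA3 := mul_le_mul_of_nonneg_left hsq h2K0
  have hA4 := mul_le_mul_of_nonneg_left h2 h2K0
  linarith [hA1, hA2, hA3, hA4]

/-- Final assembly step, with the big quantities opaque. -/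
lemma final18 (XA XB Y Dexp Dd r K c a b : ℝ)
    (hXB : 0 < XB) (hY : 0 < Y) (hDd : 1 ≤ Dd - 1) (hK : 0 < K) (hK2 : 0 < K - 2)
    (hab : 0 < a - b)
    (hcore2 : 3 * r * ((c - 1) * ((K - 1) * (Y * ((((1 - a) * (1 + a)) * ((1 - b) * (1 + b))) * Dexp))))
      ≤ 2 * (K ^ 2 * (XA * XB))) :
    3 * r * (Dd - 1) * ((K - 2) ^ 2 * ((1 + a) * ((1 - b) * (1 + b)))) *
      (((1 - a) * Dexp) * (Y * (2 * (c - 1) * (K - 1) * (a - b))))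
      < (a - b) * (K - 2) ^ 2 * (XB * ((Dd - 1) * XA + Y)) * (4 * K ^ 2) := by
  have hcoef : (0:ℝ) ≤ 2 * ((Dd - 1) * (K - 2) ^ 2) := by positivity
  have hbig := mul_le_mul_of_nonneg_left hcore2 hcoef
  have hpos5 : 0 < 4 * K ^ 2 * ((K - 2) ^ 2 * (XB * Y)) := by positivity
  have F : 3 * r * (Dd - 1) * ((K - 2) ^ 2 * ((1 + a) * ((1 - b) * (1 + b)))) *
      (((1 - a) * Dexp) * (Y * (2 * (c - 1) * (K - 1))))
      < (K - 2) ^ 2 * (XB * ((Dd - 1) * XA + Y)) * (4 * K ^ 2) := by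
    linarith only [hbig, hpos5]
  linarith only [mul_lt_mul_of_pos_right F hab]

/-- Lemma 5.3: for `π/4 < v < w < π/2`, `A (1/B - 1) > L(v,w)`. -/
theorem stmt18 (k d : ℕ) (hk : 3 ≤ k) (hd : 2 ≤ d) (c v w α β XA XB Y A B L : ℝ)
    (hc : 1 < c) (hck : c ≤ (k : ℝ) - 1)
    (hv : Real.pi / 4 < v) (hvw : v < w) (hw : w < Real.pi / 2)
    (hα : α = 4 * Real.cos v ^ 2) (hβ : β = 4 * Real.cos w ^ 2)
    (hXA : XA = (c - 1) * ((k : ℝ) - 1) * α + ((k : ℝ) - c) ^ 2)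
    (hXB : XB = (c - 1) * ((k : ℝ) - 1) * β + ((k : ℝ) - c) ^ 2)
    (hY : Y = ((k : ℝ) - c) * ((k : ℝ) + c - 2))
    (hA : A = (Real.cos (2 * v) - Real.cos (2 * w)) / (1 - Real.cos (2 * v)) *
      (((k : ℝ) - 2) ^ 2 / (((k : ℝ) - 2) ^ 2 + 2 * ((k : ℝ) - 1) * (1 - Real.cos (2 * w)))))
    (hB : B = Y * (XA - XB) / (((d : ℝ) - 1) * XA * XB + Y * XA))
    (hL : L = 3 * Real.sqrt 3 * ((d : ℝ) - 1) / 4 * (1 - 2 / (k : ℝ)) ^ 2 *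
      (1 + Real.cos (2 * v)) * Real.sin (2 * w) ^ 2) :
    A * (1 / B - 1) > L := by
  have hK3 : (3:ℝ) ≤ (k:ℝ) := by exact_mod_cast hk
  have hd2 : (2:ℝ) ≤ (d:ℝ) := by exact_mod_cast hd
  have hpi := Real.pi_pos
  set K := (k:ℝ) with hKdef
  set Dd := (d:ℝ) with hDdef
  set r := Real.sqrt 3 with hrdef
  have hr2 : r ^ 2 = 3 := Real.sq_sqrt (by norm_num)
  have hr0 : 0 < r := Real.sqrt_pos.2 (by norm_num)
  set a := Real.cos (2*v) with hadef
  set b := Real.cos (2*w) with hbdef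
  have ha0 : a < 0 := Real.cos_neg_of_pi_div_two_lt_of_lt (by linarith) (by linarith)
  have hb0 : b < 0 := Real.cos_neg_of_pi_div_two_lt_of_lt (by linarith) (by linarith)
  have hba : b < a := Real.cos_lt_cos_of_nonneg_of_le_pi (by linarith) (by linarith) (by linarith)
  have hb1 : -1 < b := by
    have h := Real.cos_lt_cos_of_nonneg_of_le_pi (show (0:ℝ) ≤ 2*w by linarith)
      (le_refl Real.pi) (by linarith)
    rw [Real.cos_pi, ← hbdef] at h
    exact h
  have hα2 : α = 2 + 2*a := by rw [hα, hadef, Real.cos_two_mul]; ring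
  have hβ2 : β = 2 + 2*b := by rw [hβ, hbdef, Real.cos_two_mul]; ring
  have hsin2 : Real.sin (2*w) ^ 2 = (1-b)*(1+b) := by
    have h := Real.sin_sq_add_cos_sq (2*w)
    rw [← hbdef] at h
    linear_combination h
  -- basic positivity
  have hp0 : 0 < c - 1 := by linarith only [hc]
  have hq0 : 0 < K - c := by linarith only [hck, hK3]
  have hm0 : 0 < K - 1 := by linarith only [hK3]
  have hK2 : 0 < K - 2 := by linarith only [hK3]
  have hK0 : 0 < K := by linarith only [hK3]
  have hs0 : 0 < 1 + a := by linarith only [hb1, hba]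
  have hs1 : 1 + a < 1 := by linarith only [ha0]
  have ht0 : 0 < 1 + b := by linarith only [hb1]
  have hts : 1 + b < 1 + a := by linarith only [hba]
  set u := Real.sqrt ((1+a)*(1+b)) with hudef
  have hu0 : 0 < u := Real.sqrt_pos.2 (mul_pos hs0 ht0)
  have hu2 : u ^ 2 = (1+a)*(1+b) := Real.sq_sqrt (le_of_lt (mul_pos hs0 ht0))
  have hus : u ≤ 1 + a := by
    have h1 : (1+a)*(1+b) ≤ (1+a)*(1+a) :=
      mul_le_mul_of_nonneg_left (le_of_lt hts) (le_of_lt hs0)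
    calc u = Real.sqrt ((1+a)*(1+b)) := hudef
      _ ≤ Real.sqrt ((1+a)*(1+a)) := Real.sqrt_le_sqrt h1
      _ = 1 + a := Real.sqrt_mul_self (le_of_lt hs0)
  have hsum : 2*u ≤ (1+a) + (1+b) := by
    have := amgm18 (1+a) (1+b) (le_of_lt hs0) (le_of_lt ht0)
    rw [← hudef] at this
    exact this
  -- explicit forms
  have hXA' : XA = 2*(c-1)*(K-1)*(1+a) + (K-c)^2 := by rw [hXA, hα2]; ring
  have hXB' : XB = 2*(c-1)*(K-1)*(1+b) + (K-c)^2 := by rw [hXB, hβ2]; ring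
  have hXApos : 0 < XA := by
    have h1 : 0 < 2*(c-1)*(K-1)*(1+a) := by positivity
    have h2 : 0 < (K-c)^2 := by positivity
    rw [hXA']; linarith only [h1, h2]
  have hXBpos : 0 < XB := by
    have h1 : 0 < 2*(c-1)*(K-1)*(1+b) := by positivity
    have h2 : 0 < (K-c)^2 := by positivity
    rw [hXB']; linarith only [h1, h2]
  have hYpos : 0 < Y := by
    rw [hY]
    exact mul_pos hq0 (by linarith only [hc, hK3])
  have hDexp : 0 < (K-2)^2 + 2*(K-1)*(1-b) := by
    have h1 : 0 < (K-2)^2 := by positivity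
    have h2 : 0 < 2*(K-1)*(1-b) := by
      have : (0:ℝ) < 1 - b := by linarith only [hb0]
      positivity
    linarith only [h1, h2]
  have hdd1 : (1:ℝ) ≤ Dd - 1 := by linarith only [hd2]
  have hXABpos : 0 < XA - XB := by
    have h1 : 0 < 2*(c-1)*(K-1)*(a-b) := by
      have : (0:ℝ) < a - b := by linarith only [hba]
      positivity
    have h2 : XA - XB = 2*(c-1)*(K-1)*(a-b) := by rw [hXA', hXB']; ring
    linarith only [h1, h2]
  have hden2 : 0 < (Dd-1)*XA*XB + Y*XA := by
    have h1 : 0 < (Dd-1)*XA*XB := by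
      have hDd0 : 0 < Dd - 1 := by linarith only [hd2]
      exact mul_pos (mul_pos hDd0 hXApos) hXBpos
    have h2 : 0 < Y*XA := mul_pos hYpos hXApos
    linarith only [h1, h2]
  -- key equation
  have hXAB : XA - XB = 2*(c-1)*(K-1)*(a-b) := by rw [hXA', hXB']; ring
  have hab : 0 < a - b := by linarith only [hba]
  have hNumB : 0 < Y * (2*(c-1)*(K-1)*(a-b)) := by
    have h2 : 0 < 2*(c-1)*(K-1)*(a-b) := by positivity
    exact mul_pos hYpos h2
  have hne4 : Y * (2*(c-1)*(K-1)*(a-b)) ≠ 0 := ne_of_gt hNumB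
  have hDden : 0 < ((1-a) * ((K-2)^2 + 2*(K-1)*(1-b))) * (Y * (2*(c-1)*(K-1)*(a-b))) := by
    have h1 : 0 < (1:ℝ)-a := by linarith only [ha0]
    exact mul_pos (mul_pos h1 hDexp) hNumB
  have hLval : L = (3*r*(Dd-1)*((K-2)^2*((1+a)*((1-b)*(1+b))))) / (4*K^2) := by
    rw [hL, hsin2]
    have hKne : K ≠ 0 := ne_of_gt hK0
    field_simp
  have hM : (Dd-1)*XA*XB + Y*XA - Y * (2*(c-1)*(K-1)*(a-b)) = XB*((Dd-1)*XA + Y) := by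
    have : Y * (2*(c-1)*(K-1)*(a-b)) = Y * (XA - XB) := by rw [hXAB]
    rw [this]; ring
  rw [gt_iff_lt, hA, hB, hXAB, one_div_div, div_sub_one hne4, div_mul_div_comm,
    div_mul_div_comm, lt_div_iff₀ hDden, hLval, div_mul_eq_mul_div,
    div_lt_iff₀ (show (0:ℝ) < 4*K^2 by positivity), hM]
  -- core inequality in atom form
  have hcore := core18 (c-1) (K-c) (1+a) (1+b) u r hp0 hq0 hs1 ht0 hts hu0 hu2 hus hsum hr2 hr0
  have hcore2 : 3*r*((c-1)*((K-1)*(Y*((((1-a)*(1+a))*((1-b)*(1+b)))*((K-2)^2 + 2*(K-1)*(1-b))))))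
      ≤ 2*(K^2*(XA*XB)) := by
    rw [hXA', hXB', hY]
    have e1 : 3*r*((c-1)*((K-1)*(((K-c)*(K+c-2))*((((1-a)*(1+a))*((1-b)*(1+b)))*((K-2)^2 + 2*(K-1)*(1-b))))))
        = 3 * r * ((c-1) * ((c-1) + (K-c)) * ((K-c) * ((K-c) + 2 * (c-1))) *
          (((2 - (1+a)) * (1+a)) * ((2 - (1+b)) * (1+b))) *
          ((((c-1) + (K-c) + 1) - 2) ^ 2 + 2 * (((c-1) + (K-c) + 1) - 1) * (2 - (1+b)))) := by
      ring
    have e2 : 2*(K^2*((2*(c-1)*(K-1)*(1+a) + (K-c)^2)*(2*(c-1)*(K-1)*(1+b) + (K-c)^2)))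
        = 2 * (((c-1) + (K-c) + 1) ^ 2 * ((2 * (c-1) * ((c-1) + (K-c)) * (1+a) + (K-c) ^ 2) *
          (2 * (c-1) * ((c-1) + (K-c)) * (1+b) + (K-c) ^ 2))) := by
      ring
    rw [e1, e2]
    exact hcore
  have hfin := final18 XA XB Y ((K-2)^2 + 2*(K-1)*(1-b)) Dd r K c a b
    hXBpos hYpos hdd1 hK0 hK2 hab hcore2
  linarith only [hfin]
end
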